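/- arXiv:1801.08250 — 8 statements merged into one kernel-verified Lean document; each statement's English description precedes it below -/
import Mathlib

section
/- Let n ≥ 2, λ > 0, μ < 0, R₀ > 0, and let f ∈ C¹([0,R₀)) ∩ C²((0,R₀)) solve f'' + ((n-1)/r)(1+f'²)f' = (1/λ)(1+f'²)²/(r f' - f) on (0,R₀) with f(0) = μ, f'(0) = 0 and r f'(r) > f(r) on [0,R₀). Then lim_{r→0⁺} f''(r) = 1/(n λ |μ|). -/
/-!
Writing `f' = tan θ`, the ODE says `(r^(n-1) sin θ)' = r^(n-1) Q cos³ θ`, where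
`Q = (1/λ)(1+f'²)²/(r f' - f)` tends to `c = 1/(λ|μ|)` as `r → 0⁺`. L'Hôpital's rule against
`r^n` gives `sin θ / r → c/n`, hence `f'(r)/r → c/n`, and the ODE then yields
`f'' = Q - (n-1)(1+f'²) f'/r → c - (n-1)c/n = c/n`.
-/

open Set Filter intervalIntegral Real

/-- `f` is a `C¹([0,R₀)) ∩ C²((0,R₀))` solution of the radially symmetric
self-similar inverse mean curvature flow ODE
`f'' + ((n-1)/r)(1+f'²)f' = (1/λ)(1+f'²)²/(r f' - f)`
with `f(0) = μ`, `f'(0) = 0` and `r f'(r) - f(r) > 0` on `[0,R₀)`. -/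
def IsIMCFSol (n : ℕ) (lam mu R₀ : ℝ) (f : ℝ → ℝ) : Prop :=
  ContinuousOn f (Set.Ico 0 R₀) ∧
  ContinuousOn (deriv f) (Set.Ico 0 R₀) ∧
  (∀ r ∈ Set.Ioo 0 R₀, DifferentiableAt ℝ f r) ∧
  (∀ r ∈ Set.Ioo 0 R₀, DifferentiableAt ℝ (deriv f) r) ∧
  ContinuousOn (deriv (deriv f)) (Set.Ioo 0 R₀) ∧
  (∀ r ∈ Set.Ioo 0 R₀,
    deriv (deriv f) r + ((n : ℝ) - 1) / r * (1 + (deriv f r) ^ 2) * deriv f r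
      = 1 / lam * (1 + (deriv f r) ^ 2) ^ 2 / (r * deriv f r - f r)) ∧
  f 0 = mu ∧ deriv f 0 = 0 ∧
  (∀ r ∈ Set.Ico 0 R₀, r * deriv f r - f r > 0)

open Topology

theorem HasDerivAt.div_sqrt_one_add_sq {g : ℝ → ℝ} {g' s : ℝ} (hg : HasDerivAt g g' s) :
    HasDerivAt (fun x => g x / √(1 + g x ^ 2)) (g' / √(1 + g s ^ 2) ^ 3) s := by
  have hpos : 0 < 1 + g s ^ 2 := by positivity
  have hS : 0 < √(1 + g s ^ 2) := Real.sqrt_pos.mpr hpos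
  have hS2 : √(1 + g s ^ 2) ^ 2 = 1 + g s ^ 2 := Real.sq_sqrt hpos.le
  refine (hg.div (((hg.pow 2).const_add 1).sqrt hpos.ne') hS.ne').congr_deriv ?_
  simp only [Pi.pow_apply]
  field_simp
  rw [hS2]
  ring

theorem hasDerivAt_pow_mul_div_sqrt_one_add_sq {g : ℝ → ℝ} {g' q s : ℝ} (m : ℕ) (hs : s ≠ 0)
    (hg : HasDerivAt g g' s) (hode : g' + m / s * (1 + g s ^ 2) * g s = q) :
    HasDerivAt (fun x => x ^ m * (g x / √(1 + g x ^ 2)))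
      (s ^ m * (q / √(1 + g s ^ 2) ^ 3)) s := by
  have hS : 0 < √(1 + g s ^ 2) := Real.sqrt_pos.mpr (by positivity)
  have hS2 : √(1 + g s ^ 2) ^ 2 = 1 + g s ^ 2 := Real.sq_sqrt (by positivity)
  have hpow : (m : ℝ) * s ^ (m - 1) = m / s * s ^ m := by
    rcases m with _ | m
    · simp
    · field_simp
      simp [pow_succ]
  refine ((hasDerivAt_pow m s).mul hg.div_sqrt_one_add_sq).congr_deriv ?_
  rw [hpow, ← hode]
  field_simp
  linear_combination (m : ℝ) * g s * hS2

theorem tendsto_div_self_of_radial_ode {g g' q : ℝ → ℝ} {c : ℝ} (m : ℕ)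
    (hg : Tendsto g (𝓝[>] 0) (𝓝 0)) (hq : Tendsto q (𝓝[>] 0) (𝓝 c))
    (hode : ∀ᶠ s in 𝓝[>] 0,
      HasDerivAt g (g' s) s ∧ g' s + m / s * (1 + g s ^ 2) * g s = q s) :
    Tendsto (fun s => g s / s) (𝓝[>] 0) (𝓝 (c / (m + 1))) := by
  have hsqrt : Tendsto (fun s => √(1 + g s ^ 2)) (𝓝[>] 0) (𝓝 1) := by
    simpa using ((hg.pow 2).const_add 1).sqrt
  have hpow (k : ℕ) : Tendsto (fun s : ℝ => s ^ k) (𝓝[>] 0) (𝓝 (0 ^ k)) :=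
    ((continuous_pow k).tendsto 0).mono_left nhdsWithin_le_nhds
  have hflux : Tendsto (fun s => s ^ m * (g s / √(1 + g s ^ 2)) / s ^ (m + 1)) (𝓝[>] 0)
      (𝓝 (c / (m + 1))) := by
    refine HasDerivAt.lhopital_zero_nhdsGT
      (f' := fun s => s ^ m * (q s / √(1 + g s ^ 2) ^ 3))
      (g' := fun s => ((m + 1 : ℕ) : ℝ) * s ^ m) ?_ ?_ ?_ ?_ ?_ ?_
    · filter_upwards [hode, self_mem_nhdsWithin] with s ⟨hd, he⟩ hs
      exact hasDerivAt_pow_mul_div_sqrt_one_add_sq m (ne_of_gt hs) hd he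
    · filter_upwards with s
      simpa using hasDerivAt_pow (m + 1) s
    · filter_upwards [self_mem_nhdsWithin] with s (hs : 0 < s)
      positivity
    · simpa using (hpow m).mul (hg.div hsqrt one_ne_zero)
    · simpa using hpow (m + 1)
    · have := (hq.div (hsqrt.pow 3) (by norm_num)).div_const ((m : ℝ) + 1)
      rw [one_pow, div_one] at this
      refine this.congr' ?_
      filter_upwards [self_mem_nhdsWithin] with s (hs : 0 < s)
      have hS : 0 < √(1 + g s ^ 2) := Real.sqrt_pos.mpr (by positivity)
      simp only [Pi.div_apply]
      push_cast
      field_simp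
  refine (by simpa using hflux.mul hsqrt : Tendsto _ _ _).congr' ?_
  filter_upwards [self_mem_nhdsWithin] with s (hs : 0 < s)
  have hS : 0 < √(1 + g s ^ 2) := Real.sqrt_pos.mpr (by positivity)
  field_simp
  ring

theorem tendsto_deriv_of_radial_ode {g g' q : ℝ → ℝ} {c : ℝ} (m : ℕ)
    (hg : Tendsto g (𝓝[>] 0) (𝓝 0)) (hq : Tendsto q (𝓝[>] 0) (𝓝 c))
    (hode : ∀ᶠ s in 𝓝[>] 0,
      HasDerivAt g (g' s) s ∧ g' s + m / s * (1 + g s ^ 2) * g s = q s) :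
    Tendsto g' (𝓝[>] 0) (𝓝 (c / (m + 1))) := by
  have hratio := tendsto_div_self_of_radial_ode m hg hq hode
  have hc : c - m * (1 + 0 ^ 2) * (c / (m + 1)) = c / (m + 1) := by
    field_simp
    ring
  rw [← hc]
  refine (hq.sub ((((hg.pow 2).const_add 1).const_mul (m : ℝ)).mul hratio)).congr' ?_
  filter_upwards [hode, self_mem_nhdsWithin] with s ⟨_, he⟩ (hs : 0 < s)
  rw [← he]
  field_simp
  ring

theorem tendsto_imcf_forcing {f g : ℝ → ℝ} {μ : ℝ} (a : ℝ) (hμ : μ ≠ 0)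
    (hf : Tendsto f (𝓝[>] 0) (𝓝 μ)) (hg : Tendsto g (𝓝[>] 0) (𝓝 0)) :
    Tendsto (fun r => a * (1 + g r ^ 2) ^ 2 / (r * g r - f r)) (𝓝[>] 0) (𝓝 (a / -μ)) := by
  have hr : Tendsto (fun r : ℝ => r) (𝓝[>] 0) (𝓝 0) :=
    tendsto_nhdsWithin_of_tendsto_nhds tendsto_id
  simpa [Pi.div_def] using (((hg.pow 2).const_add 1).pow 2).const_mul a |>.div
    ((hr.mul hg).sub hf) (by simpa using hμ)

theorem imcf_second_deriv_limit_at_zero_general (n : ℕ) (hn : 2 ≤ n)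
    (lam mu R₀ : ℝ) (hmu : mu < 0) (hR₀ : 0 < R₀)
    (f : ℝ → ℝ) (hf : IsIMCFSol n lam mu R₀ f) :
    Filter.Tendsto (deriv (deriv f)) (nhdsWithin 0 (Set.Ioi 0))
      (nhds (1 / ((n : ℝ) * lam * |mu|))) := by
  obtain ⟨hfc, hf'c, -, hf'd, -, hode, hf0, hf'0, -⟩ := hf
  obtain ⟨m, rfl⟩ : ∃ m, n = m + 1 := ⟨n - 1, by omega⟩
  have hIco : Ico 0 R₀ ∈ 𝓝[>] (0 : ℝ) :=
    mem_of_superset (Ioo_mem_nhdsGT hR₀) Ioo_subset_Ico_self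
  have hlim {φ : ℝ → ℝ} (hφ : ContinuousOn φ (Ico 0 R₀)) : Tendsto φ (𝓝[>] 0) (𝓝 (φ 0)) :=
    (hφ 0 ⟨le_rfl, hR₀⟩).mono_of_mem_nhdsWithin hIco
  have hf' : Tendsto (deriv f) (𝓝[>] 0) (𝓝 0) := by simpa [hf'0] using hlim hf'c
  have hq := tendsto_imcf_forcing (1 / lam) hmu.ne (by simpa [hf0] using hlim hfc) hf'
  have hode' : ∀ᶠ s in 𝓝[>] 0, HasDerivAt (deriv f) (deriv (deriv f) s) s ∧
      deriv (deriv f) s + m / s * (1 + deriv f s ^ 2) * deriv f s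
        = 1 / lam * (1 + deriv f s ^ 2) ^ 2 / (s * deriv f s - f s) := by
    filter_upwards [Ioo_mem_nhdsGT hR₀] with s hs
    refine ⟨(hf'd s hs).hasDerivAt, ?_⟩
    simpa using hode s hs
  convert tendsto_deriv_of_radial_ode m hf' hq hode' using 2
  rw [abs_of_neg hmu]
  push_cast
  field_simp

/-- `lim_{r→0⁺} f''(r) = 1/(n λ |μ|)`. -/
theorem imcf_second_deriv_limit_at_zero (n : ℕ) (hn : 2 ≤ n)
    (lam mu R₀ : ℝ) (hlam : 0 < lam) (hmu : mu < 0) (hR₀ : 0 < R₀)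
    (f : ℝ → ℝ) (hf : IsIMCFSol n lam mu R₀ f) :
    Filter.Tendsto (deriv (deriv f)) (nhdsWithin 0 (Set.Ioi 0))
      (nhds (1 / ((n : ℝ) * lam * |mu|))) :=
  imcf_second_deriv_limit_at_zero_general n hn lam mu R₀ hmu hR₀ f hf
end

section
/- Let n ≥ 2, λ > 0, μ < 0, R₀ > 0, and let f ∈ C¹([0,R₀)) ∩ C²((0,R₀)) solve f'' + ((n-1)/r)(1+f'²)f' = (1/λ)(1+f'²)²/(r f' - f) on (0,R₀) with f(0) = μ, f'(0) = 0 and r f'(r) > f(r) on [0,R₀). Then lim_{r→0⁺} f'(r)/r = 1/(n λ |μ|). -/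
open Set Filter intervalIntegral Real

/-!
Writing `n = m + 1`, the ODE is in divergence form:
`(r^m f'/√(1+f'²))' = r^m H` with `H = (1/λ) √(1+f'²)/(r f' - f)`, and `H` is continuous
on `[0,R₀)` with `H(0) = 1/(λ|μ|)`. The left-hand side vanishes at `r = 0`, so by l'Hôpital
`f'/(r √(1+f'²)) = (r^m f'/√(1+f'²)) / r^(m+1) → H(0)/(m+1)`, and `√(1+f'²) → 1`.
-/

open scoped Topology

theorem tendsto_nhdsGT_of_continuousOn_Ico {α β : Type*} [LinearOrder α] [TopologicalSpace α]
    [OrderTopology α] [TopologicalSpace β] {g : α → β} {a b : α} (hab : a < b)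
    (hg : ContinuousOn g (Ico a b)) : Tendsto g (𝓝[>] a) (𝓝 (g a)) :=
  (hg a ⟨le_rfl, hab⟩).tendsto.mono_left <|
    nhdsWithin_le_of_mem <| mem_of_superset (Ioo_mem_nhdsGT hab) Ioo_subset_Ico_self

theorem hasDerivAt_div_sqrt_one_add_sq (x : ℝ) :
    HasDerivAt (fun y => y / √(1 + y ^ 2)) (1 / ((1 + x ^ 2) * √(1 + x ^ 2))) x := by
  have hpos : 0 < 1 + x ^ 2 := by positivity
  have hsqrt : HasDerivAt (fun y => √(1 + y ^ 2)) (x / √(1 + x ^ 2)) x := by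
    convert ((hasDerivAt_pow 2 x).const_add 1).sqrt hpos.ne' using 1
    norm_num
    field_simp
  refine ((hasDerivAt_id' x).div hsqrt (Real.sqrt_pos.2 hpos).ne').congr_deriv ?_
  field_simp
  rw [Real.sq_sqrt hpos.le]
  ring

theorem tendsto_div_pow_succ_of_hasDerivAt {G h : ℝ → ℝ} {m : ℕ} {R L : ℝ} (hR : 0 < R)
    (hG : ∀ r ∈ Ioo 0 R, HasDerivAt G (r ^ m * h r) r)
    (hG0 : Tendsto G (𝓝[>] 0) (𝓝 0)) (hh : Tendsto h (𝓝[>] 0) (𝓝 L)) :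
    Tendsto (fun r => G r / r ^ (m + 1)) (𝓝[>] 0) (𝓝 (L / (m + 1))) := by
  have hpow : ∀ r ∈ Ioo (0 : ℝ) R, HasDerivAt (· ^ (m + 1)) ((m + 1) * r ^ m) r := fun r _ => by
    simpa using hasDerivAt_pow (m + 1) r
  have hpow0 : Tendsto (· ^ (m + 1)) (𝓝[>] (0 : ℝ)) (𝓝 0) := by
    simpa using ((continuous_pow (m + 1)).tendsto (0 : ℝ)).mono_left nhdsWithin_le_nhds
  refine HasDerivAt.lhopital_zero_right_on_Ioo hR hG hpow
    (fun r hr => by have := hr.1; positivity) hG0 hpow0 ?_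
  refine (hh.div_const _).congr' ?_
  filter_upwards [self_mem_nhdsWithin] with r (hr : 0 < r)
  field_simp

namespace IsIMCFSol

variable {m : ℕ} {lam mu R₀ : ℝ} {f : ℝ → ℝ}

theorem hasDerivAt_pow_mul_deriv_div_sqrt (hf : IsIMCFSol (m + 1) lam mu R₀ f) {r : ℝ}
    (hr : r ∈ Ioo 0 R₀) :
    HasDerivAt (fun y => y ^ m * (deriv f y / √(1 + deriv f y ^ 2)))
      (r ^ m * (1 / lam * √(1 + deriv f r ^ 2) / (r * deriv f r - f r))) r := by
  obtain ⟨-, -, -, hud, -, hode, -, -, hpos⟩ := hf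
  set u := deriv f
  have hr0 : r ≠ 0 := hr.1.ne'
  have hgap : r * u r - f r ≠ 0 := (hpos r ⟨hr.1.le, hr.2⟩).ne'
  have hone : 0 < 1 + u r ^ 2 := by positivity
  have hsqrt : √(1 + u r ^ 2) ≠ 0 := (Real.sqrt_pos.2 hone).ne'
  have hsq : √(1 + u r ^ 2) ^ 2 = 1 + u r ^ 2 := Real.sq_sqrt hone.le
  have hu' : deriv u r = 1 / lam * (1 + u r ^ 2) ^ 2 / (r * u r - f r)
      - m / r * (1 + u r ^ 2) * u r := by
    have := hode r hr
    rw [Nat.cast_succ, add_sub_cancel_right] at this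
    linarith
  have hrm : (m : ℝ) * r ^ (m - 1) = m * r ^ m / r := by
    rcases m with _ | k
    · simp
    · field_simp
      rw [Nat.add_sub_cancel, pow_succ]
  refine ((hasDerivAt_pow m r).mul
    ((hasDerivAt_div_sqrt_one_add_sq (u r)).comp r (hud r hr).hasDerivAt)).congr_deriv ?_
  rw [Function.comp_apply, hu', hrm]
  generalize 1 / lam = c
  field_simp
  linear_combination (-(r * c)) * hsq

end IsIMCFSol

theorem imcf_deriv_over_r_limit_at_zero_general (n : ℕ) (hn : 2 ≤ n)
    (lam mu R₀ : ℝ) (hR₀ : 0 < R₀)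
    (f : ℝ → ℝ) (hf : IsIMCFSol n lam mu R₀ f) :
    Filter.Tendsto (fun r => deriv f r / r) (nhdsWithin 0 (Set.Ioi 0))
      (nhds (1 / ((n : ℝ) * lam * |mu|))) := by
  obtain ⟨m, rfl⟩ : ∃ m, n = m + 1 := ⟨n - 1, by omega⟩
  obtain ⟨hfc, huc, -, -, -, -, hf0, hu0, hpos⟩ := id hf
  set u := deriv f
  have hmu : mu < 0 := by simpa [hf0, hu0] using hpos 0 ⟨le_rfl, hR₀⟩
  have hu : Tendsto u (𝓝[>] 0) (𝓝 0) := by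
    simpa only [hu0] using tendsto_nhdsGT_of_continuousOn_Ico hR₀ huc
  have hsqrt : Tendsto (fun r => √(1 + u r ^ 2)) (𝓝[>] 0) (𝓝 1) := by
    simpa using ((hu.pow 2).const_add 1).sqrt
  have hH : Tendsto (fun r => 1 / lam * √(1 + u r ^ 2) / (r * u r - f r)) (𝓝[>] 0)
      (𝓝 (1 / lam * 1 / (0 * 0 - mu))) :=
    (hsqrt.const_mul _).div (((tendsto_id.mono_left nhdsWithin_le_nhds).mul hu).sub
      (hf0 ▸ tendsto_nhdsGT_of_continuousOn_Ico hR₀ hfc)) (by linarith)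
  have hG0 : Tendsto (fun r => r ^ m * (u r / √(1 + u r ^ 2))) (𝓝[>] 0) (𝓝 0) := by
    simpa using (((continuous_pow m).tendsto 0).mono_left nhdsWithin_le_nhds).mul
      (hu.div hsqrt one_ne_zero)
  have hlim := (tendsto_div_pow_succ_of_hasDerivAt hR₀
    (fun r hr => hf.hasDerivAt_pow_mul_deriv_div_sqrt hr) hG0 hH).mul hsqrt
  have hval :
      1 / lam * 1 / (0 * 0 - mu) / (m + 1) * 1 = 1 / (((m + 1 : ℕ) : ℝ) * lam * |mu|) := by
    rw [abs_of_neg hmu, Nat.cast_succ]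
    simp only [mul_inv, div_eq_mul_inv]
    ring
  rw [← hval]
  refine hlim.congr' ?_
  filter_upwards [self_mem_nhdsWithin] with r (hr : 0 < r)
  field_simp
  ring

/-- `lim_{r→0⁺} f'(r)/r = 1/(n λ |μ|)`. -/
theorem imcf_deriv_over_r_limit_at_zero (n : ℕ) (hn : 2 ≤ n)
    (lam mu R₀ : ℝ) (hlam : 0 < lam) (hmu : mu < 0) (hR₀ : 0 < R₀)
    (f : ℝ → ℝ) (hf : IsIMCFSol n lam mu R₀ f) :
    Filter.Tendsto (fun r => deriv f r / r) (nhdsWithin 0 (Set.Ioi 0))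
      (nhds (1 / ((n : ℝ) * lam * |mu|))) :=
  imcf_deriv_over_r_limit_at_zero_general n hn lam mu R₀ hR₀ f hf
end

section
/- Let n ≥ 2, λ > 0, μ < 0, R₀ > 0, and let f ∈ C¹([0,R₀)) ∩ C²((0,R₀)) solve f'' + ((n-1)/r)(1+f'²)f' = (1/λ)(1+f'²)²/(r f' - f) on (0,R₀) with f(0) = μ, f'(0) = 0 and r f'(r) > f(r) on [0,R₀). Then there exists a constant δ > 0 such that r f'(r) − f(r) ≥ δ for all r ∈ [0,R₀). -/
open Set Filter intervalIntegral Real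

/-! The gap `g(r) = r f'(r) - f(r)` satisfies `g' = r f''`, and by the ODE
`r f'' = (1 + f'²) / (λ g) · (r (1 + f'²) - (n - 1) λ g f')`. Since `1 + f'² ≥ 2 f'`, this is
positive as soon as `(n - 1) λ g < 2 r`, so away from the origin the gap is pushed up whenever it
gets small. Hence on `[R₀/2, R₀)` it never drops below the smaller of `R₀ / (2 (n - 1) λ)` and
its positive minimum over the compact interval `[0, R₀/2]`. -/

theorem le_image_of_deriv_pos_of_eq {g g' : ℝ → ℝ} {a b m : ℝ}
    (hg : ContinuousOn g (Icc a b)) (hg' : ∀ x ∈ Ico a b, HasDerivAt g (g' x) x)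
    (ha : m ≤ g a) (hpos : ∀ x ∈ Ico a b, g x = m → 0 < g' x) :
    ∀ ⦃x⦄, x ∈ Icc a b → m ≤ g x := by
  intro x hx
  have := image_le_of_deriv_right_lt_deriv_boundary (f := fun x => -g x) (f' := fun x => -g' x)
    (B := fun _ => -m) (B' := fun _ => 0) hg.neg (fun x hx => (hg' x hx).neg.hasDerivWithinAt)
    (neg_le_neg ha) (fun _ => hasDerivAt_const _ _)
    (fun x hx hgx => neg_neg_of_pos (hpos x hx (neg_inj.mp hgx))) hx
  exact neg_le_neg_iff.mp this

theorem mul_lt_mul_one_add_sq {t k p : ℝ} (ht : 0 < t) (hk : 0 ≤ k) (hkt : k < 2 * t) :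
    k * p < t * (1 + p ^ 2) := by
  rcases le_or_gt p 0 with hp | hp
  · nlinarith [mul_nonpos_of_nonneg_of_nonpos hk hp]
  · nlinarith [sq_nonneg (p - 1), mul_lt_mul_of_pos_right hkt hp]

theorem hasDerivAt_mul_deriv_sub {f : ℝ → ℝ} {r : ℝ} (hf : DifferentiableAt ℝ f r)
    (hf' : DifferentiableAt ℝ (deriv f) r) :
    HasDerivAt (fun r => r * deriv f r - f r) (r * deriv (deriv f) r) r :=
  (((hasDerivAt_id' r).mul hf'.hasDerivAt).sub hf.hasDerivAt).congr_deriv (by ring)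

namespace IsIMCFSol

variable {n : ℕ} {lam mu R₀ : ℝ} {f : ℝ → ℝ}

theorem mul_deriv_deriv_pos (hf : IsIMCFSol n lam mu R₀ f) (hn : 1 ≤ n) (hlam : 0 < lam)
    {t : ℝ} (ht : t ∈ Ioo 0 R₀)
    (hsmall : ((n : ℝ) - 1) * lam * (t * deriv f t - f t) < 2 * t) :
    0 < t * deriv (deriv f) t := by
  obtain ⟨-, -, -, -, -, hode, -, -, hgap⟩ := hf
  have hG : 0 < t * deriv f t - f t := hgap t (Ioo_subset_Ico_self ht)
  have hn' : (0 : ℝ) ≤ (n : ℝ) - 1 := by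
    rw [sub_nonneg]; exact_mod_cast hn
  rw [eq_sub_of_add_eq (hode t ht)]
  generalize t * deriv f t - f t = G at hG hsmall ⊢
  generalize deriv f t = p
  have hformula : t * (1 / lam * (1 + p ^ 2) ^ 2 / G - ((n : ℝ) - 1) / t * (1 + p ^ 2) * p)
      = (1 + p ^ 2) / (lam * G) * (t * (1 + p ^ 2) - ((n : ℝ) - 1) * lam * G * p) := by
    field_simp [ht.1.ne']
  rw [hformula]
  exact mul_pos (by positivity)
    (sub_pos.mpr (mul_lt_mul_one_add_sq ht.1 (by positivity) hsmall))

end IsIMCFSol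

theorem imcf_structural_gap_uniform_general (n : ℕ) (hn : 2 ≤ n)
    (lam mu R₀ : ℝ) (hlam : 0 < lam) (hR₀ : 0 < R₀)
    (f : ℝ → ℝ) (hf : IsIMCFSol n lam mu R₀ f) :
    ∃ δ > (0 : ℝ), ∀ r ∈ Set.Ico 0 R₀, δ ≤ r * deriv f r - f r := by
  obtain ⟨hfc, hf'c, hfd, hf'd, -, -, -, -, hgap⟩ := id hf
  set g := fun r => r * deriv f r - f r
  have hg : ContinuousOn g (Ico 0 R₀) := (continuousOn_id.mul hf'c).sub hfc
  have ha : 0 < R₀ / 2 := half_pos hR₀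
  have hhalf : Icc 0 (R₀ / 2) ⊆ Ico 0 R₀ := Icc_subset_Ico_right (half_lt_self hR₀)
  obtain ⟨r₀, hr₀, hmin⟩ := isCompact_Icc.exists_isMinOn (nonempty_Icc.mpr ha.le) (hg.mono hhalf)
  have hc : 0 < ((n : ℝ) - 1) * lam :=
    mul_pos (by linarith [(Nat.ofNat_le_cast.mpr hn : (2 : ℝ) ≤ n)]) hlam
  set δ := min (g r₀) (R₀ / 2 / (((n : ℝ) - 1) * lam))
  have hδ_left : ∀ x ∈ Icc 0 (R₀ / 2), δ ≤ g x := fun x hx => (min_le_left _ _).trans (hmin hx)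
  have hδ_small : ((n : ℝ) - 1) * lam * δ ≤ R₀ / 2 := by
    rw [mul_comm, ← le_div_iff₀ hc]
    exact min_le_right _ _
  refine ⟨δ, lt_min (hgap r₀ (hhalf hr₀)) (by positivity), fun r hr => ?_⟩
  rcases le_or_gt r (R₀ / 2) with hle | hlt
  · exact hδ_left r ⟨hr.1, hle⟩
  have hsub : Ico (R₀ / 2) r ⊆ Ioo 0 R₀ := Ico_subset_Icc_self.trans (Icc_subset_Ioo ha hr.2)
  refine le_image_of_deriv_pos_of_eq (hg.mono (Icc_subset_Ico ha.le hr.2))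
    (fun x hx => hasDerivAt_mul_deriv_sub (hfd x (hsub hx)) (hf'd x (hsub hx)))
    (hδ_left _ ⟨ha.le, le_rfl⟩) (fun x hx hgx => ?_) ⟨hlt.le, le_rfl⟩
  refine hf.mul_deriv_deriv_pos (by omega) hlam (hsub hx) ?_
  change _ * g x < _
  rw [hgx]
  linarith [hx.1]

/-- `r f'(r) − f(r)` is uniformly bounded away from zero on `[0,R₀)`. -/
theorem imcf_structural_gap_uniform (n : ℕ) (hn : 2 ≤ n)
    (lam mu R₀ : ℝ) (hlam : 0 < lam) (hmu : mu < 0) (hR₀ : 0 < R₀)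
    (f : ℝ → ℝ) (hf : IsIMCFSol n lam mu R₀ f) :
    ∃ δ > (0 : ℝ), ∀ r ∈ Set.Ico 0 R₀, δ ≤ r * deriv f r - f r :=
  imcf_structural_gap_uniform_general n hn lam mu R₀ hlam hR₀ f hf
end

section
/- Let n ≥ 2, λ > 0, μ < 0, R₀ > 0, and let f ∈ C¹([0,R₀)) ∩ C²((0,R₀)) solve f'' + ((n-1)/r)(1+f'²)f' = (1/λ)(1+f'²)²/(r f' - f) on (0,R₀) with f(0) = μ, f'(0) = 0 and r f'(r) > f(r) on [0,R₀). Then f''(r) > 0 for all 0 < r < R₀, i.e. f is strictly convex on (0,R₀). -/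
open Set Filter intervalIntegral Real

/-! Where `f'' ≤ 0` the ODE forces `f' > 0`. At a zero of `f''` the derivative `r f''` of the
denominator `r f' - f` vanishes, so differentiating the ODE gives `f''' = (n-1)(1+f'²)f'/r² > 0`.
Hence `f''` can only cross zero upwards: if `f''(r) ≤ 0` then `f'' ≤ 0` on all of `(0, r]`, so
`f'(r) ≤ f'(0) = 0`, contradicting `f'(r) > 0`. -/

open Topology

theorem ContinuousOn.nonpos_of_deriv_pos_of_eq_zero {g : ℝ → ℝ} {a b : ℝ}
    (hg : ContinuousOn g (Ioc a b)) (hzero : ∀ x ∈ Ioc a b, g x = 0 → 0 < deriv g x)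
    (hb : g b ≤ 0) : ∀ x ∈ Ioc a b, g x ≤ 0 := by
  intro x hx
  by_contra! hgx
  have hxb : Icc x b ⊆ Ioc a b := Icc_subset_Ioc hx.1 le_rfl
  -- `c`, the first point after `x` with `g c ≤ 0`, is a zero that `g` reaches from above
  set T := Icc x b ∩ g ⁻¹' Iic 0
  have hT : IsCompact T := isCompact_Icc.of_isClosed_subset
    ((hg.mono hxb).preimage_isClosed_of_isClosed isClosed_Icc isClosed_Iic) inter_subset_left
  have hbT : b ∈ T := ⟨⟨hx.2, le_rfl⟩, hb⟩
  obtain ⟨hcIcc, hgc⟩ : sInf T ∈ T := hT.sInf_mem ⟨b, hbT⟩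
  set c := sInf T
  have hxc : x < c := hcIcc.1.lt_of_ne fun h => (not_le.2 hgx) (h ▸ hgc)
  have hpos : ∀ y ∈ Ioo x c, 0 < g y := fun y hy => not_le.1 fun hy' =>
    hy.2.not_ge (csInf_le hT.bddBelow ⟨⟨hy.1.le, hy.2.le.trans hcIcc.2⟩, hy'⟩)
  have hleft : ∀ᶠ y in 𝓝[<] c, 0 < g y := by
    rw [← nhdsWithin_Ioo_eq_nhdsLT hxc]
    exact eventually_mem_nhdsWithin.mono hpos
  have hc0 : g c = 0 := by
    refine le_antisymm hgc (ge_of_tendsto ?_ (hleft.mono fun _ => le_of_lt))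
    refine (hg c (hxb hcIcc)).tendsto.mono_left ?_
    rw [← nhdsWithin_Ioo_eq_nhdsLT hxc]
    exact nhdsWithin_mono _ (Ioo_subset_Icc_self.trans ((Icc_subset_Icc_right hcIcc.2).trans hxb))
  have hsign := eventually_nhdsWithin_sign_eq_of_deriv_pos (hzero c (hxb hcIcc) hc0) hc0
  obtain ⟨y, hy, hyc, hgy⟩ := ((hsign.filter_mono nhdsWithin_le_nhds).and
    (eventually_mem_nhdsWithin.and hleft)).exists
  rw [sign_pos hgy, sign_neg (sub_neg.2 hyc)] at hy
  exact absurd hy (by decide)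

namespace IsIMCFSol

variable {n : ℕ} {lam mu R₀ : ℝ} {f : ℝ → ℝ}

theorem deriv_pos_of_deriv_deriv_nonpos (hf : IsIMCFSol n lam mu R₀ f) (hn : 1 ≤ n)
    (hlam : 0 < lam) {r : ℝ} (hr : r ∈ Ioo 0 R₀) (hr₂ : deriv (deriv f) r ≤ 0) :
    0 < deriv f r := by
  obtain ⟨-, -, -, -, -, hode, -, -, hpos⟩ := hf
  by_contra! hr₁
  have hn' : (1 : ℝ) ≤ n := by exact_mod_cast hn
  have hrhs : 0 < 1 / lam * (1 + deriv f r ^ 2) ^ 2 / (r * deriv f r - f r) :=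
    div_pos (by positivity) (hpos r (Ioo_subset_Ico_self hr))
  have hdamp : ((n : ℝ) - 1) / r * (1 + deriv f r ^ 2) * deriv f r ≤ 0 :=
    mul_nonpos_of_nonneg_of_nonpos
      (mul_nonneg (div_nonneg (by linarith) hr.1.le) (by positivity)) hr₁
  linarith [hode r hr]

theorem hasDerivAt_deriv_deriv_of_eq_zero (hf : IsIMCFSol n lam mu R₀ f) {a : ℝ}
    (ha : a ∈ Ioo 0 R₀) (ha₂ : deriv (deriv f) a = 0) :
    HasDerivAt (deriv (deriv f)) (((n : ℝ) - 1) * (1 + deriv f a ^ 2) * deriv f a / a ^ 2) a := by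
  obtain ⟨-, -, hdiff, hdiff2, -, hode, -, -, hpos⟩ := hf
  have hf' : HasDerivAt f (deriv f a) a := (hdiff a ha).hasDerivAt
  have hf'' : HasDerivAt (deriv f) 0 a := ha₂ ▸ (hdiff2 a ha).hasDerivAt
  have hq : HasDerivAt (fun x => 1 + deriv f x ^ 2) (2 * deriv f a ^ 1 * 0) a :=
    (hf''.pow 2).const_add 1
  have hden : HasDerivAt (fun x => x * deriv f x - f x) (1 * deriv f a + a * 0 - deriv f a) a :=
    ((hasDerivAt_id a).mul hf'').sub hf'
  have hrhs := ((hq.pow 2).const_mul (1 / lam)).div hden (hpos a (Ioo_subset_Ico_self ha)).ne'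
  have hdamp := (((hasDerivAt_inv ha.1.ne').const_mul ((n : ℝ) - 1)).mul hq).mul hf''
  have hode' : deriv (deriv f) =ᶠ[𝓝 a] fun x =>
      1 / lam * (1 + deriv f x ^ 2) ^ 2 / (x * deriv f x - f x)
        - ((n : ℝ) - 1) * x⁻¹ * (1 + deriv f x ^ 2) * deriv f x := by
    filter_upwards [isOpen_Ioo.mem_nhds ha] with x hx
    rw [← div_eq_mul_inv, ← hode x hx]
    ring
  refine ((hrhs.sub hdamp).congr_of_eventuallyEq hode').congr_deriv ?_
  field_simp
  ring

theorem deriv_deriv_nonpos_on_Ioc (hf : IsIMCFSol n lam mu R₀ f) (hn : 2 ≤ n) (hlam : 0 < lam)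
    {r : ℝ} (hr : r ∈ Ioo 0 R₀) (hr₂ : deriv (deriv f) r ≤ 0) :
    ∀ x ∈ Ioc 0 r, deriv (deriv f) x ≤ 0 := by
  obtain ⟨-, -, -, -, hf''c, -⟩ := id hf
  have hsub : Ioc 0 r ⊆ Ioo 0 R₀ := Ioc_subset_Ioo_right hr.2
  refine (hf''c.mono hsub).nonpos_of_deriv_pos_of_eq_zero (fun x hx hx₂ => ?_) hr₂
  have hn' : (0 : ℝ) < n - 1 := by rw [sub_pos]; exact_mod_cast hn
  have hx₁ := hf.deriv_pos_of_deriv_deriv_nonpos (by omega) hlam (hsub hx) hx₂.le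
  rw [(hf.hasDerivAt_deriv_deriv_of_eq_zero (hsub hx) hx₂).deriv]
  exact div_pos (mul_pos (mul_pos hn' (by positivity)) hx₁) (pow_pos hx.1 2)

end IsIMCFSol

theorem imcf_strict_convexity_general (n : ℕ) (hn : 2 ≤ n)
    (lam mu R₀ : ℝ) (hlam : 0 < lam)
    (f : ℝ → ℝ) (hf : IsIMCFSol n lam mu R₀ f) :
    ∀ r ∈ Set.Ioo 0 R₀, 0 < deriv (deriv f) r := by
  intro r hr
  by_contra! hr₂
  obtain ⟨-, hf'c, -, hdiff2, -, -, -, hf'0, -⟩ := id hf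
  have hconcave := hf.deriv_deriv_nonpos_on_Ioc hn hlam hr hr₂
  have hanti : AntitoneOn (deriv f) (Icc 0 r) := by
    refine antitoneOn_of_deriv_nonpos (convex_Icc 0 r)
      (hf'c.mono (Icc_subset_Ico_right hr.2)) ?_ ?_ <;> rw [interior_Icc]
    · exact fun x hx => (hdiff2 x (Ioo_subset_Ioo_right hr.2.le hx)).differentiableWithinAt
    · exact fun x hx => hconcave x (Ioo_subset_Ioc_self hx)
  have hle : deriv f r ≤ deriv f 0 :=
    hanti (left_mem_Icc.2 hr.1.le) (right_mem_Icc.2 hr.1.le) hr.1.le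
  linarith [hf.deriv_pos_of_deriv_deriv_nonpos (by omega) hlam hr hr₂]

/-- strict convexity: `f''(r) > 0` on `(0,R₀)`. -/
theorem imcf_strict_convexity (n : ℕ) (hn : 2 ≤ n)
    (lam mu R₀ : ℝ) (hlam : 0 < lam) (hmu : mu < 0) (hR₀ : 0 < R₀)
    (f : ℝ → ℝ) (hf : IsIMCFSol n lam mu R₀ f) :
    ∀ r ∈ Set.Ioo 0 R₀, 0 < deriv (deriv f) r :=
  imcf_strict_convexity_general n hn lam mu R₀ hlam f hf
end

section
/- Let n ≥ 2, λ > 1/(n−1), μ < 0, R₀ > 0, and let f ∈ C¹([0,R₀)) ∩ C²((0,R₀)) solve f'' + ((n-1)/r)(1+f'²)f' = (1/λ)(1+f'²)²/(r f' - f) on (0,R₀) with f(0) = μ, f'(0) = 0 and r f'(r) > f(r) on [0,R₀). Then there exists a constant M₁ > 0 such that 0 ≤ f'(r) ≤ M₁ for all 0 ≤ r < R₀. -/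
open Set Filter intervalIntegral Real

/-!
Write `c = λ(n-1)` and `Q = c f' (r f' - f) - r (1 + f'²)`. The ODE says that `f''` has the sign
of `-Q`; in particular `f'' > 0` where `f' < 0`, so `f' ≥ 0`. At a zero of `Q` we get `f'' = 0`,
hence `Q' = -(1 + f'²) < 0`, so once `Q ≤ 0` it stays so. If `Q > 0` on all of `(0, R₀)`, `f'`
decreases from `f'(0) = 0`. Otherwise `Q ≤ 0` beyond some `a > 0`, which for `c > 1` gives
`(c - 1) a f'² ≤ R₀ + c |f| f'`: `f'` grows at most linearly in `|f|`, and Grönwall bounds `f`,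
hence `f'`.
-/

theorem nonneg_of_deriv_pos_of_neg {g g' : ℝ → ℝ} {a b : ℝ} (hc : ContinuousOn g (Ico a b))
    (hd : ∀ x ∈ Ioo a b, HasDerivAt g (g' x) x) (ha : 0 ≤ g a)
    (hpos : ∀ x ∈ Ioo a b, g x < 0 → 0 < g' x) : ∀ x ∈ Ico a b, 0 ≤ g x := by
  intro x hx
  by_contra! hgx
  have hsub : Icc a x ⊆ Ico a b := Icc_subset_Ico_right hx.2
  have hS : IsCompact (Icc a x ∩ g ⁻¹' Ici 0) :=
    isCompact_Icc.of_isClosed_subset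
      ((hc.mono hsub).preimage_isClosed_of_isClosed isClosed_Icc isClosed_Ici) inter_subset_left
  obtain ⟨s, ⟨⟨has, hsx⟩, hgs : 0 ≤ g s⟩, hs_max⟩ := hS.exists_isGreatest ⟨a, ⟨le_rfl, hx.1⟩, ha⟩
  have hsx : s < x := hsx.lt_of_ne (by rintro rfl; exact hgx.not_ge hgs)
  have hneg : ∀ y ∈ Ioc s x, g y < 0 := fun y hy ↦
    not_le.1 fun h ↦ hy.1.not_ge (hs_max ⟨⟨has.trans hy.1.le, hy.2⟩, h⟩)
  have hmono : StrictMonoOn g (Icc s x) := by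
    refine strictMonoOn_of_deriv_pos (convex_Icc s x)
      (hc.mono fun y hy ↦ hsub ⟨has.trans hy.1, hy.2⟩) fun y hy ↦ ?_
    rw [interior_Icc] at hy
    have hyI : y ∈ Ioo a b := ⟨has.trans_lt hy.1, hy.2.trans hx.2⟩
    rw [(hd y hyI).deriv]
    exact hpos y hyI (hneg y ⟨hy.1, hy.2.le⟩)
  exact (hmono (left_mem_Icc.2 hsx.le) (right_mem_Icc.2 hsx.le) hsx).not_ge (hgx.le.trans hgs)

theorem norm_le_gronwallBound_of_norm_deriv_le_Ico {E : Type*} [NormedAddCommGroup E]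
    [NormedSpace ℝ E] {f f' : ℝ → E} {a b K ε : ℝ} (hK : 0 ≤ K) (hε : 0 ≤ ε)
    (hf : ∀ x ∈ Ico a b, HasDerivAt f (f' x) x) (bound : ∀ x ∈ Ico a b, ‖f' x‖ ≤ K * ‖f x‖ + ε) :
    ∀ x ∈ Ico a b, ‖f x‖ ≤ gronwallBound ‖f a‖ K ε (b - a) := by
  intro x hx
  have hsub : Icc a x ⊆ Ico a b := Icc_subset_Ico_right hx.2
  have hsub' : Ico a x ⊆ Ico a b := hsub.trans' Ico_subset_Icc_self
  calc ‖f x‖ ≤ gronwallBound ‖f a‖ K ε (x - a) :=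
        norm_le_gronwallBound_of_norm_deriv_right_le
          (fun y hy ↦ (hf y (hsub hy)).continuousAt.continuousWithinAt)
          (fun y hy ↦ (hf y (hsub' hy)).hasDerivWithinAt) le_rfl
          (fun y hy ↦ bound y (hsub' hy)) x (right_mem_Icc.2 hx.1)
    _ ≤ gronwallBound ‖f a‖ K ε (b - a) :=
        gronwallBound_mono (norm_nonneg _) hε hK (by linarith [hx.2])

theorem ContinuousOn.bddAbove_image_Ico_of_tail {g : ℝ → ℝ} {a b c : ℝ}
    (hg : ContinuousOn g (Ico a b)) (hc : c < b) (h : BddAbove (g '' Ico c b)) :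
    BddAbove (g '' Ico a b) := by
  have hcover : Ico a b ⊆ Icc a c ∪ Ico c b := fun x hx ↦
    (lt_or_ge x c).imp (fun hxc ↦ ⟨hx.1, hxc.le⟩) fun hcx ↦ ⟨hcx, hx.2⟩
  refine BddAbove.mono (image_mono hcover) ?_
  rw [image_union]
  exact (isCompact_Icc.bddAbove_image (hg.mono (Icc_subset_Ico_right hc))).union h

theorem le_add_add_one_of_sq_le {x y α : ℝ} (hy : 0 ≤ y) (hα : 0 ≤ α)
    (h : x ^ 2 ≤ α + y * x) : x ≤ y + α + 1 := by
  rcases le_or_gt x 1 with hx1 | hx1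
  · linarith
  · nlinarith

noncomputable def imcfQ (c : ℝ) (f : ℝ → ℝ) (r : ℝ) : ℝ :=
  c * deriv f r * (r * deriv f r - f r) - r * (1 + deriv f r ^ 2)

theorem hasDerivAt_imcfQ {c r : ℝ} {f : ℝ → ℝ} (hf : DifferentiableAt ℝ f r)
    (hf' : DifferentiableAt ℝ (deriv f) r) :
    HasDerivAt (imcfQ c f)
      (deriv (deriv f) r * (c * (r * deriv f r - f r) + (c - 2) * r * deriv f r)
        - (1 + deriv f r ^ 2)) r := by
  have hg := hf'.hasDerivAt
  refine (((hg.const_mul c).mul (((hasDerivAt_id' r).mul hg).sub hf.hasDerivAt)).sub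
    ((hasDerivAt_id' r).mul ((hg.pow 2).const_add 1))).congr_deriv ?_
  simp only [Pi.mul_apply, Pi.sub_apply, Pi.pow_apply]
  push_cast
  ring

theorem deriv_le_of_imcfQ_nonpos {c a R r : ℝ} {f : ℝ → ℝ} (hc : 1 < c) (ha : 0 < a)
    (har : a ≤ r) (hrR : r ≤ R) (hg : 0 ≤ deriv f r) (hQ : imcfQ c f r ≤ 0) :
    deriv f r ≤ c / ((c - 1) * a) * |f r| + R / ((c - 1) * a) + 1 := by
  set x := deriv f r
  have hca : 0 < (c - 1) * a := mul_pos (by linarith) ha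
  have hR : 0 < R := ha.trans_le (har.trans hrR)
  have hquad : (c - 1) * a * x ^ 2 ≤ R + c * |f r| * x := by
    unfold imcfQ at hQ
    nlinarith [mul_le_mul_of_nonneg_right har (mul_nonneg (sub_nonneg.2 hc.le) (sq_nonneg x)),
      mul_le_mul_of_nonneg_right (le_abs_self (f r)) hg]
  refine le_add_add_one_of_sq_le (by positivity) (by positivity) ?_
  calc x ^ 2 = (c - 1) * a * x ^ 2 / ((c - 1) * a) := (mul_div_cancel_left₀ _ hca.ne').symm
    _ ≤ (R + c * |f r| * x) / ((c - 1) * a) := by gcongr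
    _ = R / ((c - 1) * a) + c / ((c - 1) * a) * |f r| * x := by ring

namespace IsIMCFSol

variable {n : ℕ} {lam mu R₀ : ℝ} {f : ℝ → ℝ}

theorem deriv2_mul_eq (hf : IsIMCFSol n lam mu R₀ f) (hlam : lam ≠ 0) {r : ℝ}
    (hr : r ∈ Ioo 0 R₀) :
    deriv (deriv f) r * (lam * r * (r * deriv f r - f r)) =
      -((1 + deriv f r ^ 2) * imcfQ (lam * ((n : ℝ) - 1)) f r) := by
  obtain ⟨-, -, -, -, -, hode, -, -, hdenom⟩ := hf
  have hh : r * deriv f r - f r ≠ 0 := (hdenom r (Ioo_subset_Ico_self hr)).ne'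
  have hr0 : r ≠ 0 := hr.1.ne'
  rw [eq_sub_of_add_eq (hode r hr), imcfQ]
  generalize r * deriv f r - f r = h at hh ⊢
  field_simp
  ring

theorem deriv2_pos_iff (hf : IsIMCFSol n lam mu R₀ f) (hlam : 0 < lam) {r : ℝ}
    (hr : r ∈ Ioo 0 R₀) : 0 < deriv (deriv f) r ↔ imcfQ (lam * ((n : ℝ) - 1)) f r < 0 := by
  have heq := hf.deriv2_mul_eq hlam.ne' hr
  obtain ⟨-, -, -, -, -, -, -, -, hdenom⟩ := hf
  have hD : 0 < lam * r * (r * deriv f r - f r) :=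
    mul_pos (mul_pos hlam hr.1) (hdenom r (Ioo_subset_Ico_self hr))
  rw [← mul_pos_iff_of_pos_right hD, heq, ← mul_neg, mul_pos_iff_of_pos_left (by positivity),
    neg_pos]

theorem deriv2_nonneg_iff (hf : IsIMCFSol n lam mu R₀ f) (hlam : 0 < lam) {r : ℝ}
    (hr : r ∈ Ioo 0 R₀) : 0 ≤ deriv (deriv f) r ↔ imcfQ (lam * ((n : ℝ) - 1)) f r ≤ 0 := by
  have heq := hf.deriv2_mul_eq hlam.ne' hr
  obtain ⟨-, -, -, -, -, -, -, -, hdenom⟩ := hf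
  have hD : 0 < lam * r * (r * deriv f r - f r) :=
    mul_pos (mul_pos hlam hr.1) (hdenom r (Ioo_subset_Ico_self hr))
  rw [← mul_nonneg_iff_of_pos_right hD, heq, ← mul_neg,
    mul_nonneg_iff_of_pos_left (by positivity), neg_nonneg]

theorem deriv_nonneg (hf : IsIMCFSol n lam mu R₀ f) (hlam : 0 < lam)
    (hc : 0 ≤ lam * ((n : ℝ) - 1)) : ∀ r ∈ Ico 0 R₀, 0 ≤ deriv f r := by
  have hderiv2_pos := fun r (hr : r ∈ Ioo 0 R₀) ↦ (hf.deriv2_pos_iff hlam hr).2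
  obtain ⟨-, hg, -, hg', -, -, -, hg0, hdenom⟩ := hf
  refine nonneg_of_deriv_pos_of_neg hg (fun r hr ↦ (hg' r hr).hasDerivAt) hg0.ge
    fun r hr hgr ↦ hderiv2_pos r hr ?_
  have : lam * ((n : ℝ) - 1) * deriv f r * (r * deriv f r - f r) ≤ 0 :=
    mul_nonpos_of_nonpos_of_nonneg (mul_nonpos_of_nonneg_of_nonpos hc hgr.le)
      (hdenom r (Ioo_subset_Ico_self hr)).le
  unfold imcfQ
  nlinarith [hr.1, sq_nonneg (deriv f r)]

theorem imcfQ_nonpos_of_imcfQ_nonpos (hf : IsIMCFSol n lam mu R₀ f) (hlam : 0 < lam) {a : ℝ}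
    (ha : a ∈ Ioo 0 R₀) (hQa : imcfQ (lam * ((n : ℝ) - 1)) f a ≤ 0) :
    ∀ x ∈ Ico a R₀, imcfQ (lam * ((n : ℝ) - 1)) f x ≤ 0 := by
  intro x hx
  have hsub : Icc a x ⊆ Ioo 0 R₀ := fun y hy ↦ ⟨ha.1.trans_le hy.1, hy.2.trans_lt hx.2⟩
  have hderiv2_zero : ∀ y ∈ Ioo 0 R₀, imcfQ (lam * ((n : ℝ) - 1)) f y = 0 →
      deriv (deriv f) y = 0 := fun y hy hQy ↦ le_antisymm
    (not_lt.1 fun h ↦ ((hf.deriv2_pos_iff hlam hy).1 h).ne hQy)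
    ((hf.deriv2_nonneg_iff hlam hy).2 hQy.le)
  obtain ⟨-, -, hf', hg', -⟩ := hf
  have hQ' := fun y (hy : y ∈ Icc a x) ↦
    hasDerivAt_imcfQ (c := lam * ((n : ℝ) - 1)) (hf' y (hsub hy)) (hg' y (hsub hy))
  refine image_le_of_deriv_right_lt_deriv_boundary (B := 0) (B' := 0)
    (fun y hy ↦ (hQ' y hy).continuousAt.continuousWithinAt)
    (fun y hy ↦ (hQ' y (Ico_subset_Icc_self hy)).hasDerivWithinAt) hQa
    (fun _ ↦ hasDerivAt_const _ _) (fun y hy hQy ↦ ?_) (right_mem_Icc.2 hx.1)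
  rw [hderiv2_zero y (hsub (Ico_subset_Icc_self hy)) hQy, zero_mul, zero_sub]
  exact neg_neg_of_pos (by positivity)

theorem bddAbove_deriv_Ico_of_imcfQ_nonpos (hf : IsIMCFSol n lam mu R₀ f) (hlam : 0 < lam)
    (hc : 1 < lam * ((n : ℝ) - 1)) {a : ℝ} (ha : a ∈ Ioo 0 R₀)
    (hQa : imcfQ (lam * ((n : ℝ) - 1)) f a ≤ 0) : BddAbove (deriv f '' Ico a R₀) := by
  set c := lam * ((n : ℝ) - 1)
  have hsub : Ico a R₀ ⊆ Ico 0 R₀ := Ico_subset_Ico_left ha.1.le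
  have hca : 0 < (c - 1) * a := mul_pos (by linarith) ha.1
  set K := c / ((c - 1) * a)
  set ε := R₀ / ((c - 1) * a) + 1
  have hbound : ∀ x ∈ Ico a R₀, ‖deriv f x‖ ≤ K * ‖f x‖ + ε := fun x hx ↦ by
    have hgx := hf.deriv_nonneg hlam (by linarith) x (hsub hx)
    rw [Real.norm_eq_abs, Real.norm_eq_abs, abs_of_nonneg hgx, ← add_assoc]
    exact deriv_le_of_imcfQ_nonpos hc ha.1 hx.1 hx.2.le hgx
      (hf.imcfQ_nonpos_of_imcfQ_nonpos hlam ha hQa x hx)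
  obtain ⟨-, -, hf', -⟩ := hf
  have hfb := norm_le_gronwallBound_of_norm_deriv_le_Ico (by positivity)
    (by have := ha.1.trans ha.2; positivity)
    (fun x hx ↦ (hf' x ⟨ha.1.trans_le hx.1, hx.2⟩).hasDerivAt) hbound
  refine ⟨K * gronwallBound ‖f a‖ K ε (R₀ - a) + ε, forall_mem_image.2 fun x hx ↦ ?_⟩
  calc deriv f x ≤ ‖deriv f x‖ := le_abs_self _
    _ ≤ K * ‖f x‖ + ε := hbound x hx
    _ ≤ K * gronwallBound ‖f a‖ K ε (R₀ - a) + ε := by gcongr; exact hfb x hx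

theorem bddAbove_deriv (hf : IsIMCFSol n lam mu R₀ f) (hlam : 0 < lam)
    (hc : 1 < lam * ((n : ℝ) - 1)) : BddAbove (deriv f '' Ico 0 R₀) := by
  by_cases hQ : ∃ a ∈ Ioo 0 R₀, imcfQ (lam * ((n : ℝ) - 1)) f a ≤ 0
  · obtain ⟨a, ha, hQa⟩ := hQ
    have hbdd := hf.bddAbove_deriv_Ico_of_imcfQ_nonpos hlam hc ha hQa
    obtain ⟨-, hg, -⟩ := hf
    exact hg.bddAbove_image_Ico_of_tail ha.2 hbdd
  · push Not at hQ
    have hderiv2_neg : ∀ y ∈ Ioo 0 R₀, deriv (deriv f) y < 0 := fun y hy ↦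
      not_le.1 fun h ↦ (hQ y hy).not_ge ((hf.deriv2_nonneg_iff hlam hy).1 h)
    obtain ⟨-, hg, -, hg', -, -, -, hg0, -⟩ := hf
    have hanti : AntitoneOn (deriv f) (Ico 0 R₀) := by
      refine antitoneOn_of_deriv_nonpos (convex_Ico 0 R₀) hg ?_ ?_ <;> rw [interior_Ico]
      · exact fun y hy ↦ (hg' y hy).differentiableWithinAt
      · exact fun y hy ↦ (hderiv2_neg y hy).le
    exact ⟨0, forall_mem_image.2 fun x hx ↦
      hg0 ▸ hanti ⟨le_rfl, hx.1.trans_lt hx.2⟩ hx hx.1⟩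

end IsIMCFSol

theorem imcf_deriv_bounded_general (n : ℕ) (hn : 2 ≤ n)
    (lam mu R₀ : ℝ) (hlam : 1 / ((n : ℝ) - 1) < lam)
    (f : ℝ → ℝ) (hf : IsIMCFSol n lam mu R₀ f) :
    ∃ M₁ > (0 : ℝ), ∀ r ∈ Set.Ico 0 R₀, 0 ≤ deriv f r ∧ deriv f r ≤ M₁ := by
  have hn1 : (0 : ℝ) < (n : ℝ) - 1 := by
    have : (2 : ℝ) ≤ n := by exact_mod_cast hn
    linarith
  have hlam0 : 0 < lam := (one_div_pos.2 hn1).trans hlam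
  have hc : 1 < lam * ((n : ℝ) - 1) := by rwa [div_lt_iff₀ hn1] at hlam
  obtain ⟨M, hM⟩ := hf.bddAbove_deriv hlam0 hc
  exact ⟨max M 1, lt_max_of_lt_right one_pos, fun r hr ↦ ⟨hf.deriv_nonneg hlam0 (by linarith) r hr,
    (hM (mem_image_of_mem _ hr)).trans (le_max_left _ _)⟩⟩

/-- a priori bound on `f'` when `λ > 1/(n−1)`. -/
theorem imcf_deriv_bounded (n : ℕ) (hn : 2 ≤ n)
    (lam mu R₀ : ℝ) (hlam : 1 / ((n : ℝ) - 1) < lam) (hmu : mu < 0) (hR₀ : 0 < R₀)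
    (f : ℝ → ℝ) (hf : IsIMCFSol n lam mu R₀ f) :
    ∃ M₁ > (0 : ℝ), ∀ r ∈ Set.Ico 0 R₀, 0 ≤ deriv f r ∧ deriv f r ≤ M₁ :=
  imcf_deriv_bounded_general n hn lam mu R₀ hlam f hf
end

section
/- Let n ≥ 2, λ > 1/(n−1), μ < 0, and let f be the unique global solution on [0,∞) of f'' + ((n-1)/r)(1+f'²)f' = (1/λ)(1+f'²)²/(r f' − f) with f(0) = μ, f'(0) = 0 and r f'(r) > f(r) for all r ≥ 0. Then f''(r) > 0 for all r > 0 and lim_{r→∞} f(r) = ∞. -/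
/-!
Write the equation as `f'' = Q - (n-1)(1+f'²)f'/r` with speed term
`Q = (1+f'²)²/(λ(rf'-f)) > 0`. Then `f'' > 0` wherever `f' ≤ 0`, and at a zero of `f''`
differentiating the equation gives `f''' = (n-1)(1+f'²)f'/r²`. Hence `f'` and, once `f' > 0` is
known, `f''` can cross zero on `(0,∞)` only upwards. So if `f'(r) ≤ 0` then `f' ≤ 0` on `(0,r)`,
forcing `f'' > 0` there and `f'(r) > f'(0) = 0`; and if `f''(r) ≤ 0` then `f'' ≤ 0` on `(0,r)`,
forcing `f'(r) ≤ f'(0) = 0`. Divergence follows from `f' ≥ f'(1) > 0` on `[1,∞)`.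
-/

open Set Filter intervalIntegral Real

/-- `f` is a global `C¹([0,∞)) ∩ C²((0,∞))` solution of the radially symmetric
self-similar inverse mean curvature flow ODE
`f'' + ((n-1)/r)(1+f'²)f' = (1/λ)(1+f'²)²/(r f' - f)`
with `f(0) = μ`, `f'(0) = 0` and `r f'(r) - f(r) > 0` on `[0,∞)`. -/
def IsIMCFSolGlobal (n : ℕ) (lam mu : ℝ) (f : ℝ → ℝ) : Prop :=
  ContinuousOn f (Set.Ici 0) ∧
  ContinuousOn (deriv f) (Set.Ici 0) ∧
  (∀ r ∈ Set.Ioi (0 : ℝ), DifferentiableAt ℝ f r) ∧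
  (∀ r ∈ Set.Ioi (0 : ℝ), DifferentiableAt ℝ (deriv f) r) ∧
  ContinuousOn (deriv (deriv f)) (Set.Ioi 0) ∧
  (∀ r ∈ Set.Ioi (0 : ℝ),
    deriv (deriv f) r + ((n : ℝ) - 1) / r * (1 + (deriv f r) ^ 2) * deriv f r
      = 1 / lam * (1 + (deriv f r) ^ 2) ^ 2 / (r * deriv f r - f r)) ∧
  f 0 = mu ∧ deriv f 0 = 0 ∧
  (∀ r ∈ Set.Ici (0 : ℝ), r * deriv f r - f r > 0)

theorem pos_of_pos_of_hasDerivWithinAt_pos_of_eq_zero {g : ℝ → ℝ} {a b : ℝ} (hab : a ≤ b)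
    (hg : ContinuousOn g (Icc a b)) (ha : 0 < g a)
    (hzero : ∀ x ∈ Ioc a b, g x = 0 → ∃ D, 0 < D ∧ HasDerivWithinAt g D (Iio x) x) :
    0 < g b := by
  by_contra! hb
  set Z := Icc a b ∩ g ⁻¹' {0}
  have hZ : IsClosed Z := hg.preimage_isClosed_of_isClosed isClosed_Icc isClosed_singleton
  have hZbdd : BddBelow Z := ⟨a, fun x hx => hx.1.1⟩
  obtain ⟨x, hx, hgx⟩ := intermediate_value_Icc' hab hg ⟨hb, ha.le⟩
  set z := sInf Z
  have hzZ : z ∈ Z := hZ.csInf_mem ⟨x, hx, hgx⟩ hZbdd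
  have hgz : g z = 0 := hzZ.2
  have hpos : ∀ y ∈ Ico a z, 0 < g y := by
    intro y hy
    by_contra! hy0
    have hyb : y ≤ b := hy.2.le.trans hzZ.1.2
    obtain ⟨w, hw, hgw⟩ :=
      intermediate_value_Icc' hy.1 (hg.mono (Icc_subset_Icc_right hyb)) ⟨hy0, ha.le⟩
    have : z ≤ w := csInf_le hZbdd ⟨⟨hw.1, hw.2.trans hyb⟩, hgw⟩
    linarith [hw.2, hy.2]
  have haz : a < z := hzZ.1.1.lt_of_ne fun h => by rw [h] at ha; linarith
  obtain ⟨D, hD, hgD⟩ := hzero z ⟨haz, hzZ.1.2⟩ hgz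
  have hslope := (hasDerivWithinAt_iff_tendsto_slope' (self_notMem_Iio (a := z))).1 hgD
  have : D ≤ 0 := le_of_tendsto hslope <| by
    filter_upwards [Ioo_mem_nhdsLT haz] with y hy
    rw [slope_def_field, hgz, sub_zero]
    exact div_nonpos_of_nonneg_of_nonpos (hpos y ⟨hy.1.le, hy.2⟩).le (by linarith [hy.2])
  linarith

theorem tendsto_atTop_of_pos_le_deriv {f : ℝ → ℝ} {a C : ℝ} (hC : 0 < C)
    (hf : ContinuousOn f (Ici a)) (hd : DifferentiableOn ℝ f (Ioi a))
    (hle : ∀ x ∈ Ioi a, C ≤ deriv f x) : Tendsto f atTop atTop := by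
  rw [← interior_Ici] at hd hle
  have hlin : ∀ y ∈ Ici a, f a + C * (y - a) ≤ f y := fun y hy => by
    linarith [(convex_Ici a).mul_sub_le_image_sub_of_le_deriv hf hd hle a self_mem_Ici y hy hy]
  refine tendsto_atTop_mono' _ (eventually_ge_atTop a |>.mono hlin) ?_
  exact tendsto_atTop_add_const_left _ _
    ((tendsto_atTop_add_const_right _ (-a) tendsto_id).const_mul_atTop hC)

namespace IsIMCFSolGlobal

variable {n : ℕ} {lam mu : ℝ} {f : ℝ → ℝ}

theorem deriv_deriv_eq (hf : IsIMCFSolGlobal n lam mu f) {r : ℝ} (hr : 0 < r) :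
    deriv (deriv f) r = 1 / lam * (1 + deriv f r ^ 2) ^ 2 / (r * deriv f r - f r)
      - ((n : ℝ) - 1) / r * (1 + deriv f r ^ 2) * deriv f r :=
  eq_sub_of_add_eq (hf.2.2.2.2.2.1 r hr)

theorem deriv_deriv_pos_of_deriv_nonpos (hf : IsIMCFSolGlobal n lam mu f) (hlam : 0 < lam)
    (hn : 1 ≤ n) {r : ℝ} (hr : 0 < r) (hp : deriv f r ≤ 0) : 0 < deriv (deriv f) r := by
  have hw : 0 < r * deriv f r - f r := hf.2.2.2.2.2.2.2.2 r hr.le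
  have hn' : (0 : ℝ) ≤ n - 1 := by
    have : (1 : ℝ) ≤ n := by exact_mod_cast hn
    linarith
  have hterm : ((n : ℝ) - 1) / r * (1 + deriv f r ^ 2) * deriv f r ≤ 0 :=
    mul_nonpos_of_nonneg_of_nonpos (by positivity) hp
  rw [hf.deriv_deriv_eq hr]
  have : 0 < 1 / lam * (1 + deriv f r ^ 2) ^ 2 / (r * deriv f r - f r) := by positivity
  linarith

-- With `f'' = 0` both `(1 + f'²)²` and `r f' - f` are stationary, so the speed term drops out.
theorem hasDerivAt_deriv_deriv_of_deriv_deriv_eq_zero (hf : IsIMCFSolGlobal n lam mu f)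
    {r : ℝ} (hr : 0 < r) (h : deriv (deriv f) r = 0) :
    HasDerivAt (deriv (deriv f)) (((n : ℝ) - 1) / r ^ 2 * (1 + deriv f r ^ 2) * deriv f r) r := by
  have ⟨_, _, hd, hd', _, _, _, _, hw⟩ := hf
  have hf' : HasDerivAt f (deriv f r) r := (hd r hr).hasDerivAt
  have hp' : HasDerivAt (deriv f) 0 r := h ▸ (hd' r hr).hasDerivAt
  have hsq := (hp'.pow 2).const_add 1
  have hspeed := ((hsq.pow 2).const_mul (1 / lam)).div (((hasDerivAt_id r).mul hp').sub hf')
    (hw r hr.le).ne'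
  have hcurv :=
    (((hasDerivAt_const r ((n : ℝ) - 1)).div (hasDerivAt_id r) hr.ne').mul hsq).mul hp'
  refine ((hspeed.sub hcurv).congr_deriv ?_).congr_of_eventuallyEq ?_
  · simp only [Pi.pow_apply, id]
    field_simp
    ring
  · filter_upwards [Ioi_mem_nhds hr] with x hx using hf.deriv_deriv_eq hx

theorem deriv_pos (hf : IsIMCFSolGlobal n lam mu f) (hlam : 0 < lam) (hn : 1 ≤ n) {r : ℝ}
    (hr : 0 < r) : 0 < deriv f r := by
  have ⟨_, hc', _, hd', _, _, _, h0', _⟩ := hf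
  by_contra! hp
  have hnonpos : ∀ s ∈ Ioo 0 r, deriv f s ≤ 0 := by
    intro s hs
    by_contra! hps
    refine hp.not_gt (pos_of_pos_of_hasDerivWithinAt_pos_of_eq_zero hs.2.le
      (hc'.mono fun x hx => hs.1.le.trans hx.1) hps fun x hx hx0 => ?_)
    have hx : 0 < x := hs.1.trans hx.1
    exact ⟨_, hf.deriv_deriv_pos_of_deriv_nonpos hlam hn hx hx0.le,
      (hd' x hx).hasDerivAt.hasDerivWithinAt⟩
  have hmono : StrictMonoOn (deriv f) (Icc 0 r) := by
    refine strictMonoOn_of_deriv_pos (convex_Icc 0 r) (hc'.mono Icc_subset_Ici_self) ?_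
    rw [interior_Icc]
    exact fun x hx => hf.deriv_deriv_pos_of_deriv_nonpos hlam hn hx.1 (hnonpos x hx)
  have := hmono (left_mem_Icc.2 hr.le) (right_mem_Icc.2 hr.le) hr
  linarith

theorem deriv_deriv_pos (hf : IsIMCFSolGlobal n lam mu f) (hlam : 0 < lam) (hn : 2 ≤ n)
    {r : ℝ} (hr : 0 < r) : 0 < deriv (deriv f) r := by
  have ⟨_, hc', _, hd', hc'', _, _, h0', _⟩ := hf
  have hn' : (0 : ℝ) < n - 1 := by
    have : (2 : ℝ) ≤ n := by exact_mod_cast hn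
    linarith
  by_contra! hr'
  have hnonpos : ∀ s ∈ Ioo 0 r, deriv (deriv f) s ≤ 0 := by
    intro s hs
    by_contra! hps
    refine hr'.not_gt (pos_of_pos_of_hasDerivWithinAt_pos_of_eq_zero hs.2.le
      (hc''.mono fun x hx => hs.1.trans_le hx.1) hps fun x hx hx0 => ?_)
    have hx : 0 < x := hs.1.trans hx.1
    have := hf.deriv_pos hlam (by omega) hx
    exact ⟨_, by positivity,
      (hf.hasDerivAt_deriv_deriv_of_deriv_deriv_eq_zero hx hx0).hasDerivWithinAt⟩
  have hanti : AntitoneOn (deriv f) (Icc 0 r) := by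
    refine antitoneOn_of_deriv_nonpos (convex_Icc 0 r) (hc'.mono Icc_subset_Ici_self) ?_ ?_
    all_goals rw [interior_Icc]
    · exact fun x hx => (hd' x hx.1).differentiableWithinAt
    · exact hnonpos
  have := hanti (left_mem_Icc.2 hr.le) (right_mem_Icc.2 hr.le) hr.le
  linarith [hf.deriv_pos hlam (by omega) hr]

theorem tendsto_atTop (hf : IsIMCFSolGlobal n lam mu f) (hlam : 0 < lam) (hn : 2 ≤ n) :
    Tendsto f atTop atTop := by
  have ⟨hc, hc', hd, _⟩ := hf
  have hmono : StrictMonoOn (deriv f) (Ici 0) :=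
    strictMonoOn_of_deriv_pos (convex_Ici 0) hc' fun x hx =>
      hf.deriv_deriv_pos hlam hn (by rwa [interior_Ici] at hx)
  refine tendsto_atTop_of_pos_le_deriv (hf.deriv_pos hlam (by omega) one_pos)
    (hc.mono (Ici_subset_Ici.2 zero_le_one))
    (fun x hx => (hd x (zero_lt_one.trans (mem_Ioi.1 hx))).differentiableWithinAt) fun x hx => ?_
  exact (hmono (mem_Ici.2 zero_le_one) (mem_Ici.2 (zero_le_one.trans (le_of_lt hx))) hx).le

end IsIMCFSolGlobal

theorem imcf_global_convexity_and_divergence_general (n : ℕ) (hn : 2 ≤ n)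
    (lam mu : ℝ) (hlam : 1 / ((n : ℝ) - 1) < lam)
    (f : ℝ → ℝ) (hf : IsIMCFSolGlobal n lam mu f) :
    (∀ r ∈ Set.Ioi (0 : ℝ), 0 < deriv (deriv f) r) ∧
      Filter.Tendsto f Filter.atTop Filter.atTop := by
  have hn' : (1 : ℝ) < n := by exact_mod_cast hn
  have hlam0 : 0 < lam := (one_div_pos.2 (sub_pos.2 hn')).trans hlam
  exact ⟨fun r hr => hf.deriv_deriv_pos hlam0 hn hr, hf.tendsto_atTop hlam0 hn⟩

/-- global convexity and divergence of `f`. -/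
theorem imcf_global_convexity_and_divergence (n : ℕ) (hn : 2 ≤ n)
    (lam mu : ℝ) (hlam : 1 / ((n : ℝ) - 1) < lam) (hmu : mu < 0)
    (f : ℝ → ℝ) (hf : IsIMCFSolGlobal n lam mu f) :
    (∀ r ∈ Set.Ioi (0 : ℝ), 0 < deriv (deriv f) r) ∧
      Filter.Tendsto f Filter.atTop Filter.atTop :=
  imcf_global_convexity_and_divergence_general n hn lam mu hlam f hf
end

section
/- Let n ≥ 2, λ > 1/(n−1), μ < 0, and let f be the unique global solution on [0,∞) of f'' + ((n-1)/r)(1+f'²)f' = (1/λ)(1+f'²)²/(r f' − f) with f(0) = μ, f'(0) = 0 and r f'(r) > f(r) for all r ≥ 0. Then lim_{r→∞} f'(r) = ∞. -/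
open Set Filter intervalIntegral Real

/-! Write `p = f'` and `h = r p - f > 0`. The equation reads `λ r h f'' = (1 + p²) Q` with
`Q = r (1 + p²) - λ (n - 1) p h`, and `Q' = 1 + p² > 0` wherever `Q = 0` (there `f'' = 0`).
So `Q` crosses zero only upwards. If `Q < 0` on all of `(0, ∞)`, then `f'` decreases from
`f'(0) = 0`, and `p < 0` forces `Q > 0`; hence `Q ≥ 0`, i.e. `f'` is nondecreasing, on some
`[a, ∞)`. If `f'` did not tend to `∞` it would be bounded by some `L` there, and then
`h' = r f'' ≥ r / (λ h) - C`, which keeps `h` above the barrier `(r - a) / D` for `D` large.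
Integrating `(f / r)' = h / r²` gives `f(r) / r ≥ log r / D - const → ∞`, contradicting
`f(r) / r < f'(r) ≤ L`. -/

theorem le_of_hasDerivAt_of_lt_of_eq {g g' B B' : ℝ → ℝ} {a x : ℝ}
    (hg : ∀ y ≥ a, HasDerivAt g (g' y) y) (hB : ∀ y ≥ a, HasDerivAt B (B' y) y)
    (ha : g a ≤ B a) (bound : ∀ y ≥ a, g y = B y → g' y < B' y) (hx : a ≤ x) :
    g x ≤ B x :=
  image_le_of_deriv_right_lt_deriv_boundary'
    (fun y hy => (hg y hy.1).continuousAt.continuousWithinAt)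
    (fun y hy => (hg y hy.1).hasDerivWithinAt) ha
    (fun y hy => (hB y hy.1).continuousAt.continuousWithinAt)
    (fun y hy => (hB y hy.1).hasDerivWithinAt) (fun y hy => bound y hy.1) ⟨hx, le_rfl⟩

theorem MonotoneOn.exists_forall_le_of_not_tendsto_atTop {g : ℝ → ℝ} {a : ℝ}
    (hg : MonotoneOn g (Ici a)) (h : ¬Tendsto g atTop atTop) : ∃ L, ∀ r ≥ a, g r ≤ L := by
  simp only [tendsto_atTop, not_forall, not_eventually, not_le] at h
  obtain ⟨L, hL⟩ := h
  refine ⟨L, fun r hr => ?_⟩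
  obtain ⟨s, hrs, hs⟩ := frequently_atTop.mp hL r
  exact (hg hr (hr.trans hrs) hrs).trans hs.le

theorem tendsto_div_self_atTop_of_le_mul_deriv_sub {f f' : ℝ → ℝ} {a D : ℝ} (ha : 0 < a)
    (hD : 0 < D) (hf : ∀ r ≥ a, HasDerivAt f (f' r) r)
    (hbound : ∀ r ≥ a, (r - a) / D ≤ r * f' r - f r) :
    Tendsto (fun r => f r / r) atTop atTop := by
  set φ : ℝ → ℝ := fun r => f r / r - (log r + a / r) / D
  have hφ : ∀ r ≥ a, HasDerivAt φ ((r * f' r - f r - (r - a) / D) / r ^ 2) r := fun r hr => by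
    have hr0 : r ≠ 0 := (ha.trans_le hr).ne'
    refine (((hf r hr).div (hasDerivAt_id' r) hr0).sub (((hasDerivAt_log hr0).add
      ((hasDerivAt_const r a).div (hasDerivAt_id' r) hr0)).div_const D)).congr_deriv ?_
    field_simp
    ring
  have hmono : MonotoneOn φ (Ici a) :=
    monotoneOn_of_hasDerivWithinAt_nonneg (convex_Ici a)
      (fun r hr => (hφ r hr).continuousAt.continuousWithinAt)
      (fun r hr => (hφ r (interior_subset hr)).hasDerivWithinAt) fun r hr =>
      div_nonneg (sub_nonneg.mpr (hbound r (interior_subset hr))) (sq_nonneg r)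
  have hlower : ∀ r ≥ a, φ a + log r / D ≤ f r / r := fun r hr => by
    have h := hmono self_mem_Ici hr hr
    have : 0 ≤ a / r / D := by have := ha.trans_le hr; positivity
    simp only [φ, add_div] at h ⊢
    linarith
  exact tendsto_atTop_mono' atTop (eventually_ge_atTop a |>.mono hlower)
    (tendsto_atTop_add_const_left _ _ (tendsto_log_atTop.atTop_div_const hD))

noncomputable def imcfConvexityFactor (n : ℕ) (lam : ℝ) (f : ℝ → ℝ) (r : ℝ) : ℝ :=
  r * (1 + deriv f r ^ 2) - lam * ((n : ℝ) - 1) * deriv f r * (r * deriv f r - f r)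

namespace IsIMCFSolGlobal

variable {n : ℕ} {lam mu : ℝ} {f : ℝ → ℝ} {r : ℝ}

theorem mul_deriv_sub_pos (hf : IsIMCFSolGlobal n lam mu f) (hr : 0 ≤ r) :
    0 < r * deriv f r - f r :=
  hf.2.2.2.2.2.2.2.2 r hr

theorem div_lt_deriv (hf : IsIMCFSolGlobal n lam mu f) (hr : 0 < r) : f r / r < deriv f r := by
  rw [div_lt_iff₀ hr]
  linarith [hf.mul_deriv_sub_pos hr.le]

theorem continuousOn_deriv (hf : IsIMCFSolGlobal n lam mu f) : ContinuousOn (deriv f) (Ici 0) :=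
  hf.2.1

theorem deriv_apply_zero (hf : IsIMCFSolGlobal n lam mu f) : deriv f 0 = 0 :=
  hf.2.2.2.2.2.2.2.1

theorem hasDerivAt (hf : IsIMCFSolGlobal n lam mu f) (hr : 0 < r) :
    HasDerivAt f (deriv f r) r :=
  (hf.2.2.1 r hr).hasDerivAt

theorem hasDerivAt_deriv (hf : IsIMCFSolGlobal n lam mu f) (hr : 0 < r) :
    HasDerivAt (deriv f) (deriv (deriv f) r) r :=
  (hf.2.2.2.1 r hr).hasDerivAt

theorem deriv2_eq (hf : IsIMCFSolGlobal n lam mu f) (hr : 0 < r) :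
    deriv (deriv f) r = 1 / lam * (1 + deriv f r ^ 2) ^ 2 / (r * deriv f r - f r)
      - ((n : ℝ) - 1) / r * (1 + deriv f r ^ 2) * deriv f r :=
  eq_sub_of_add_eq (hf.2.2.2.2.2.1 r hr)

theorem exists_pos_deriv2_eq_mul (hf : IsIMCFSolGlobal n lam mu f) (hlam : 0 < lam)
    (hr : 0 < r) : ∃ c > 0, deriv (deriv f) r = c * imcfConvexityFactor n lam f r := by
  have hh := hf.mul_deriv_sub_pos hr.le
  refine ⟨(1 + deriv f r ^ 2) / (lam * r * (r * deriv f r - f r)), by positivity, ?_⟩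
  rw [hf.deriv2_eq hr, imcfConvexityFactor]
  generalize r * deriv f r - f r = h at hh ⊢
  field_simp

theorem hasDerivAt_imcfConvexityFactor (hf : IsIMCFSolGlobal n lam mu f) (hr : 0 < r) :
    HasDerivAt (imcfConvexityFactor n lam f) (1 + deriv f r ^ 2 + deriv (deriv f) r *
      (2 * r * deriv f r - lam * ((n : ℝ) - 1) * (2 * r * deriv f r - f r))) r := by
  have hp := hf.hasDerivAt_deriv hr
  refine (((hasDerivAt_id' r).mul ((hp.pow 2).const_add 1)).sub
    ((hp.const_mul (lam * ((n : ℝ) - 1))).mul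
      (((hasDerivAt_id' r).mul hp).sub (hf.hasDerivAt hr)))).congr_deriv ?_
  simp only [Pi.mul_apply, Pi.sub_apply, Pi.pow_apply]
  ring

theorem hasDerivAt_mul_deriv_sub (hf : IsIMCFSolGlobal n lam mu f) (hr : 0 < r) :
    HasDerivAt (fun s => s * deriv f s - f s) (r * deriv (deriv f) r) r :=
  (((hasDerivAt_id' r).mul (hf.hasDerivAt_deriv hr)).sub (hf.hasDerivAt hr)).congr_deriv
    (by ring)

theorem imcfConvexityFactor_nonneg_of_le (hf : IsIMCFSolGlobal n lam mu f) (hlam : 0 < lam)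
    {a x : ℝ} (ha : 0 < a) (hQa : 0 ≤ imcfConvexityFactor n lam f a) (hx : a ≤ x) :
    0 ≤ imcfConvexityFactor n lam f x := by
  refine le_of_hasDerivAt_of_lt_of_eq (fun y _ => hasDerivAt_const y 0)
    (fun y hy => hf.hasDerivAt_imcfConvexityFactor (ha.trans_le hy)) hQa (fun y hy hQy => ?_) hx
  obtain ⟨c, -, hc⟩ := hf.exists_pos_deriv2_eq_mul hlam (ha.trans_le hy)
  rw [hc, ← hQy, mul_zero, zero_mul, add_zero]
  positivity

theorem exists_monotoneOn_deriv (hf : IsIMCFSolGlobal n lam mu f) (hn : 1 ≤ n)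
    (hlam : 0 < lam) : ∃ a > 0, MonotoneOn (deriv f) (Ici a) := by
  by_cases hQ : ∃ a > 0, 0 ≤ imcfConvexityFactor n lam f a
  · obtain ⟨a, ha, hQa⟩ := hQ
    refine ⟨a, ha, monotoneOn_of_hasDerivWithinAt_nonneg (convex_Ici a)
      (fun r hr => (hf.hasDerivAt_deriv (ha.trans_le hr)).continuousAt.continuousWithinAt)
      (fun r hr => (hf.hasDerivAt_deriv (ha.trans_le (interior_subset hr))).hasDerivWithinAt)
      fun r hr => ?_⟩
    have hr : a ≤ r := interior_subset hr
    obtain ⟨c, hc, hf''⟩ := hf.exists_pos_deriv2_eq_mul hlam (ha.trans_le hr)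
    rw [hf'']
    exact mul_nonneg hc.le (hf.imcfConvexityFactor_nonneg_of_le hlam ha hQa hr)
  · push Not at hQ
    have hanti : StrictAntiOn (deriv f) (Ici 0) :=
      strictAntiOn_of_deriv_neg (convex_Ici 0) hf.continuousOn_deriv fun r hr => by
        rw [interior_Ici] at hr
        obtain ⟨c, hc, hf''⟩ := hf.exists_pos_deriv2_eq_mul hlam hr
        rw [hf'']
        exact mul_neg_of_pos_of_neg hc (hQ r hr)
    have hp : deriv f 1 < 0 :=
      hf.deriv_apply_zero ▸ hanti self_mem_Ici (mem_Ici.mpr zero_le_one) zero_lt_one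
    have hn' : (0 : ℝ) ≤ n - 1 := sub_nonneg.mpr (by exact_mod_cast hn)
    have hprod : lam * ((n : ℝ) - 1) * deriv f 1 * (1 * deriv f 1 - f 1) ≤ 0 :=
      mul_nonpos_of_nonpos_of_nonneg (mul_nonpos_of_nonneg_of_nonpos (mul_nonneg hlam.le hn') hp.le)
        (hf.mul_deriv_sub_pos zero_le_one).le
    have hQ1 := hQ 1 one_pos
    rw [imcfConvexityFactor] at hQ1
    nlinarith [sq_nonneg (deriv f 1)]

theorem mul_deriv2_ge (hf : IsIMCFSolGlobal n lam mu f) (hn : 1 ≤ n) (hlam : 0 < lam) {L : ℝ}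
    (hr : 0 < r) (hL : deriv f r ≤ L) :
    r / (lam * (r * deriv f r - f r)) - ((n : ℝ) - 1) * ((1 + L ^ 2) * L)
      ≤ r * deriv (deriv f) r := by
  have hh := hf.mul_deriv_sub_pos hr.le
  have hn' : (0 : ℝ) ≤ n - 1 := sub_nonneg.mpr (by exact_mod_cast hn)
  have hsplit : r * deriv (deriv f) r = r / (lam * (r * deriv f r - f r)) * (1 + deriv f r ^ 2) ^ 2
      - ((n : ℝ) - 1) * ((1 + deriv f r ^ 2) * deriv f r) := by
    rw [hf.deriv2_eq hr]
    field_simp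
  have hfirst : r / (lam * (r * deriv f r - f r))
      ≤ r / (lam * (r * deriv f r - f r)) * (1 + deriv f r ^ 2) ^ 2 :=
    le_mul_of_one_le_right (by positivity) (one_le_pow₀ (by nlinarith [sq_nonneg (deriv f r)]))
  have hcubic : (1 + deriv f r ^ 2) * deriv f r ≤ (1 + L ^ 2) * L := by
    nlinarith [sq_nonneg (deriv f r - L), sq_nonneg (deriv f r + L), sq_nonneg L]
  nlinarith [mul_le_mul_of_nonneg_left hcubic hn']

theorem exists_le_mul_deriv_sub (hf : IsIMCFSolGlobal n lam mu f) (hn : 1 ≤ n) (hlam : 0 < lam)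
    {a L : ℝ} (ha : 0 < a) (hL : ∀ r ≥ a, deriv f r ≤ L) :
    ∃ D > 0, ∀ r ≥ a, (r - a) / D ≤ r * deriv f r - f r := by
  set C := ((n : ℝ) - 1) * ((1 + L ^ 2) * L)
  set D := lam * (|C| + 1) + 1
  have hD : 1 < D := by have := abs_nonneg C; nlinarith
  refine ⟨D, by linarith, fun r hr => le_of_hasDerivAt_of_lt_of_eq
    (fun y _ => ((hasDerivAt_id' y).sub_const a).div_const D)
    (fun y hy => hf.hasDerivAt_mul_deriv_sub (ha.trans_le hy)) ?_ (fun y hy hcontact => ?_) hr⟩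
  · simpa using (hf.mul_deriv_sub_pos ha.le).le
  · -- at a contact point `h ≤ y / D`, so the term `y / (λ h)` in `h'` is at least `D / λ`
    have hy0 := ha.trans_le hy
    have hh := hf.mul_deriv_sub_pos hy0.le
    have hDh : D * (y * deriv f y - f y) ≤ y := by
      rw [← hcontact, mul_div_cancel₀ _ (by positivity)]
      linarith
    have hlarge : D / lam ≤ y / (lam * (y * deriv f y - f y)) := by
      rw [div_le_div_iff₀ hlam (by positivity)]
      nlinarith
    have hDlam : D / lam = |C| + 1 + 1 / lam := by field_simp; ring
    have hinvD : 1 / D < 1 := by rw [div_lt_one (by linarith)]; exact hD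
    have := hf.mul_deriv2_ge hn hlam hy0 (hL y hy)
    linarith [le_abs_self C, one_div_pos.mpr hlam]

end IsIMCFSolGlobal

theorem imcf_deriv_tendsto_atTop_general (n : ℕ) (hn : 2 ≤ n)
    (lam mu : ℝ) (hlam : 1 / ((n : ℝ) - 1) < lam)
    (f : ℝ → ℝ) (hf : IsIMCFSolGlobal n lam mu f) :
    Filter.Tendsto (deriv f) Filter.atTop Filter.atTop := by
  by_contra hT
  have hn1 : 1 ≤ n := by omega
  have hlam_pos : 0 < lam := lt_trans (one_div_pos.mpr (by
    have : (2 : ℝ) ≤ n := by exact_mod_cast hn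
    linarith)) hlam
  obtain ⟨a, ha, hmono⟩ := hf.exists_monotoneOn_deriv hn1 hlam_pos
  obtain ⟨L, hL⟩ := hmono.exists_forall_le_of_not_tendsto_atTop hT
  obtain ⟨D, hD, hbarrier⟩ := hf.exists_le_mul_deriv_sub hn1 hlam_pos ha hL
  have hgrowth := tendsto_div_self_atTop_of_le_mul_deriv_sub ha hD
    (fun r hr => hf.hasDerivAt (ha.trans_le hr)) hbarrier
  obtain ⟨r, hLr, hr⟩ := ((hgrowth.eventually_gt_atTop L).and (eventually_ge_atTop a)).exists
  linarith [hL r hr, hf.div_lt_deriv (ha.trans_le hr)]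

/-- `lim_{r→∞} f'(r) = ∞`. -/
theorem imcf_deriv_tendsto_atTop (n : ℕ) (hn : 2 ≤ n)
    (lam mu : ℝ) (hlam : 1 / ((n : ℝ) - 1) < lam) (hmu : mu < 0)
    (f : ℝ → ℝ) (hf : IsIMCFSolGlobal n lam mu f) :
    Filter.Tendsto (deriv f) Filter.atTop Filter.atTop :=
  imcf_deriv_tendsto_atTop_general n hn lam mu hlam f hf
end

section
/- Let n ≥ 2, λ > 0, μ < 0. If f: [0,∞) → ℝ solves f'' + ((n-1)/r)(1+f'²)f' = (1/λ)(1+f'²)²/(r f' − f) on (0,∞) with f(0) = μ, f'(0) = 0 and r f'(r) > f(r) for all r ≥ 0, then u(x,t) := e^{λt} f(e^{−λt}|x|) is a solution of the graphical inverse mean curvature flow equation u_t = −√(1+|∇u|²)·(div(∇u/√(1+|∇u|²)))^{−1} on (ℝⁿ \ {0}) × ℝ. -/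
open Set Filter Real

/-- The divergence of a vector field on `ℝⁿ`: `div V (x) = ∑ᵢ ∂ᵢ Vᵢ(x)`. -/
noncomputable def divergence {n : ℕ} (V : EuclideanSpace ℝ (Fin n) → EuclideanSpace ℝ (Fin n))
    (x : EuclideanSpace ℝ (Fin n)) : ℝ :=
  ∑ i : Fin n, fderiv ℝ V x (EuclideanSpace.single i 1) i

/-!
For a radial function `y ↦ φ ‖y‖` the gradient is `(φ'(ρ)/ρ) • y`, and the divergence of a radial
field `y ↦ ψ ‖y‖ • y` on `ℝⁿ` is `n ψ(ρ) + ρ ψ'(ρ)`, where `ρ = ‖y‖`. Applied to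
`u(·, t) = e^{λt} f(e^{-λt} ‖·‖)` this gives `∇u = (f'(r)/ρ) • y` with `r = e^{-λt} ρ`, and the
mean curvature `div (∇u / √(1 + |∇u|²))` is `e^{-λt}` times the radial mean curvature
`f''/(1 + f'²)^{3/2} + (n - 1) f'/(r √(1 + f'²))` of the profile, which the ODE identifies with
`√(1 + f'²) / (λ (r f' - f))`. Comparing with `u_t = λ e^{λt} (f(r) - r f'(r))` gives the flow
equation.
-/

open Topology

section RadialCalculus

variable {E : Type*} [NormedAddCommGroup E] [InnerProductSpace ℝ E]

theorem hasFDerivAt_norm_of_ne_zero {x : E} (hx : x ≠ 0) :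
    HasFDerivAt (fun y : E => ‖y‖) (‖x‖⁻¹ • innerSL ℝ x) x := by
  have hsqrt := (hasStrictFDerivAt_norm_sq x).hasFDerivAt.sqrt (by positivity)
  simp only [sqrt_sq (norm_nonneg _)] at hsqrt
  refine hsqrt.congr_fderiv ?_
  ext v
  simp only [smul_apply, innerSL_apply_apply, smul_eq_mul, nsmul_eq_mul, Nat.cast_ofNat]
  field_simp

theorem HasDerivAt.hasGradientAt_comp_norm [CompleteSpace E] {φ : ℝ → ℝ} {φ' : ℝ} {x : E}
    (hx : x ≠ 0) (hφ : HasDerivAt φ φ' ‖x‖) :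
    HasGradientAt (fun y => φ ‖y‖) ((φ' / ‖x‖) • x) x := by
  rw [hasGradientAt_iff_hasFDerivAt]
  refine (hφ.comp_hasFDerivAt x (hasFDerivAt_norm_of_ne_zero hx)).congr_fderiv ?_
  ext v
  simp only [InnerProductSpace.toDual_apply_apply, real_inner_smul_left,
    smul_apply, smul_eq_mul, innerSL_apply_apply]
  ring

theorem gradient_selfSimilar [CompleteSpace E] {f : ℝ → ℝ} {c s : ℝ} (hcs : c * s = 1) {x : E}
    (hx : x ≠ 0) (hf : DifferentiableAt ℝ f (s * ‖x‖)) :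
    gradient (fun y => c * f (s * ‖y‖)) x = (deriv f (s * ‖x‖) / ‖x‖) • x := by
  have hprofile : HasDerivAt (fun ρ => c * f (s * ρ)) (c * (deriv f (s * ‖x‖) * s)) ‖x‖ :=
    (hf.hasDerivAt.comp ‖x‖ (hasDerivAt_const_mul s)).const_mul c
  rw [(hprofile.hasGradientAt_comp_norm hx).gradient, mul_left_comm, hcs, mul_one]

theorem norm_div_norm_smul_self {x : E} (hx : x ≠ 0) (a : ℝ) : ‖(a / ‖x‖) • x‖ = |a| := by
  rw [norm_smul, norm_div, norm_norm, Real.norm_eq_abs, div_mul_cancel₀ _ (norm_ne_zero_iff.mpr hx)]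

theorem inv_sqrt_one_add_norm_sq_smul {x : E} (hx : x ≠ 0) (a : ℝ) :
    (√(1 + ‖(a / ‖x‖) • x‖ ^ 2))⁻¹ • (a / ‖x‖) • x = (a / √(1 + a ^ 2) / ‖x‖) • x := by
  rw [norm_div_norm_smul_self hx, sq_abs, smul_smul]
  ring_nf

end RadialCalculus

section Divergence

variable {n : ℕ}

theorem divergence_congr {V W : EuclideanSpace ℝ (Fin n) → EuclideanSpace ℝ (Fin n)}
    {x : EuclideanSpace ℝ (Fin n)} (h : V =ᶠ[𝓝 x] W) : divergence V x = divergence W x := by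
  rw [divergence, divergence, h.fderiv_eq]

theorem divergence_smul_self_comp_norm {ψ : ℝ → ℝ} {ψ' : ℝ} {x : EuclideanSpace ℝ (Fin n)}
    (hx : x ≠ 0) (hψ : HasDerivAt ψ ψ' ‖x‖) :
    divergence (fun y => ψ ‖y‖ • y) x = n * ψ ‖x‖ + ‖x‖ * ψ' := by
  have hV : HasFDerivAt (fun y => ψ ‖y‖ • y)
      (ψ ‖x‖ • ContinuousLinearMap.id ℝ _ + (ψ' • ‖x‖⁻¹ • innerSL ℝ x).smulRight x) x :=
    (hψ.comp_hasFDerivAt x (hasFDerivAt_norm_of_ne_zero hx)).smul (hasFDerivAt_id x)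
  have hsum : ∑ i, x i * x i = ‖x‖ ^ 2 := by
    rw [← real_inner_self_eq_norm_sq, PiLp.inner_apply]
    simp [sq]
  rw [divergence, hV.fderiv]
  simp only [add_apply, smul_apply, ContinuousLinearMap.id_apply,
    ContinuousLinearMap.smulRight_apply, coe_innerSL_apply, EuclideanSpace.inner_single_right,
    ringHom_apply, one_mul, smul_eq_mul, PiLp.add_apply, PiLp.smul_apply, PiLp.single_eq_same,
    mul_one, Finset.sum_add_distrib, Finset.sum_const, Finset.card_univ, Fintype.card_fin,
    nsmul_eq_mul, add_right_inj]
  simp_rw [mul_assoc, ← Finset.mul_sum, hsum]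
  field_simp

theorem divergence_radial_profile (g : ℝ → ℝ) {G s : ℝ} {x : EuclideanSpace ℝ (Fin n)}
    (hx : x ≠ 0) (hg : HasDerivAt g G (s * ‖x‖)) :
    divergence (fun y => (g (s * ‖y‖) / ‖y‖) • y) x
      = s * G + (n - 1) * (g (s * ‖x‖) / ‖x‖) := by
  have hx' : ‖x‖ ≠ 0 := norm_ne_zero_iff.mpr hx
  have hψ : HasDerivAt (fun ρ => g (s * ρ) / ρ)
      ((G * s * ‖x‖ - g (s * ‖x‖)) / ‖x‖ ^ 2) ‖x‖ :=
    ((hg.comp ‖x‖ (hasDerivAt_const_mul s)).div (hasDerivAt_id ‖x‖) hx').congr_deriv (by simp)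
  rw [divergence_smul_self_comp_norm hx hψ]
  field_simp
  ring

end Divergence

theorem hasDerivAt_div_sqrt_one_add_sq_s17 {h : ℝ → ℝ} {b r : ℝ} (hh : HasDerivAt h b r) :
    HasDerivAt (fun ρ => h ρ / √(1 + h ρ ^ 2)) (b / √(1 + h r ^ 2) ^ 3) r := by
  have hpos : 0 < 1 + h r ^ 2 := by positivity
  have hsq : HasDerivAt (fun ρ => 1 + h ρ ^ 2) (2 * h r * b) r := by
    simpa using (hh.pow 2).const_add 1
  refine (hh.div (hsq.sqrt hpos.ne') (sqrt_pos.mpr hpos).ne').congr_deriv ?_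
  field_simp
  linear_combination b * sq_sqrt hpos.le

theorem radialMeanCurvature_eq_of_ode {ν lam r a b y : ℝ} (hr : r ≠ 0) (hD : r * a - y ≠ 0)
    (hode : b + ν / r * (1 + a ^ 2) * a = 1 / lam * (1 + a ^ 2) ^ 2 / (r * a - y)) :
    b / √(1 + a ^ 2) ^ 3 + ν * (a / √(1 + a ^ 2)) / r = √(1 + a ^ 2) / (lam * (r * a - y)) := by
  have hpos : 0 < 1 + a ^ 2 := by positivity
  have hS := sq_sqrt hpos.le
  have hSne := (sqrt_pos.mpr hpos).ne'
  rw [show b = 1 / lam * (1 + a ^ 2) ^ 2 / (r * a - y) - ν / r * (1 + a ^ 2) * a by linarith]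
  generalize √(1 + a ^ 2) = S at *
  rw [← hS]
  field_simp
  ring

theorem divergence_normalized_gradient_selfSimilar {n : ℕ} {f : ℝ → ℝ} {lam c s : ℝ}
    (hcs : c * s = 1) (hs : 0 < s) {x : EuclideanSpace ℝ (Fin n)} (hx : x ≠ 0)
    (hdf : ∀ r ∈ Ioi (0 : ℝ), DifferentiableAt ℝ f r)
    (hdf' : DifferentiableAt ℝ (deriv f) (s * ‖x‖))
    (hode : deriv (deriv f) (s * ‖x‖)
        + ((n : ℝ) - 1) / (s * ‖x‖) * (1 + deriv f (s * ‖x‖) ^ 2) * deriv f (s * ‖x‖)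
      = 1 / lam * (1 + deriv f (s * ‖x‖) ^ 2) ^ 2
        / (s * ‖x‖ * deriv f (s * ‖x‖) - f (s * ‖x‖)))
    (hD : s * ‖x‖ * deriv f (s * ‖x‖) - f (s * ‖x‖) ≠ 0) :
    divergence (fun y => (√(1 + ‖gradient (fun z => c * f (s * ‖z‖)) y‖ ^ 2))⁻¹ •
        gradient (fun z => c * f (s * ‖z‖)) y) x
      = s * (√(1 + deriv f (s * ‖x‖) ^ 2)
        / (lam * (s * ‖x‖ * deriv f (s * ‖x‖) - f (s * ‖x‖)))) := by
  have hfield : (fun y => (√(1 + ‖gradient (fun z => c * f (s * ‖z‖)) y‖ ^ 2))⁻¹ •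
        gradient (fun z => c * f (s * ‖z‖)) y)
      =ᶠ[𝓝 x] fun y => ((deriv f (s * ‖y‖) / √(1 + deriv f (s * ‖y‖) ^ 2)) / ‖y‖) • y :=
    (eventually_ne_nhds hx).mono fun y hy => by
      simp only [gradient_selfSimilar hcs hy (hdf _ (mul_pos hs (norm_pos_iff.mpr hy))),
        inv_sqrt_one_add_norm_sq_smul hy]
  rw [divergence_congr hfield, divergence_radial_profile _ hx
    (hasDerivAt_div_sqrt_one_add_sq_s17 hdf'.hasDerivAt), ← radialMeanCurvature_eq_of_ode
    (mul_pos hs (norm_pos_iff.mpr hx)).ne' hD hode]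
  field_simp

theorem hasDerivAt_selfSimilar {f : ℝ → ℝ} {lam R t : ℝ}
    (hf : DifferentiableAt ℝ f (exp (-lam * t) * R)) :
    HasDerivAt (fun τ => exp (lam * τ) * f (exp (-lam * τ) * R))
      (lam * exp (lam * t) * (f (exp (-lam * t) * R)
        - exp (-lam * t) * R * deriv f (exp (-lam * t) * R))) t := by
  have hscale := (((hasDerivAt_id t).const_mul (-lam)).exp).mul_const R
  have hgrow := ((hasDerivAt_id t).const_mul lam).exp
  refine (hgrow.mul (hf.hasDerivAt.comp t hscale)).congr_deriv ?_
  simp only [id, mul_one, Function.comp]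
  ring

theorem imcf_self_similar_solution_general (n : ℕ)
    (lam mu : ℝ)
    (f : ℝ → ℝ) (hf : IsIMCFSolGlobal n lam mu f)
    (u : EuclideanSpace ℝ (Fin n) → ℝ → ℝ)
    (hu : ∀ x t, u x t = Real.exp (lam * t) * f (Real.exp (-lam * t) * ‖x‖)) :
    ∀ x : EuclideanSpace ℝ (Fin n), x ≠ 0 → ∀ t : ℝ,
      HasDerivAt (u x)
        (-(Real.sqrt (1 + ‖gradient (fun y => u y t) x‖ ^ 2) *
          (divergence (fun y =>
              (Real.sqrt (1 + ‖gradient (fun z => u z t) y‖ ^ 2))⁻¹ •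
                gradient (fun z => u z t) y) x)⁻¹)) t := by
  obtain ⟨-, -, hdf, hdf', -, hode, -, -, hpos⟩ := hf
  intro x hx t
  set s := exp (-lam * t)
  set c := exp (lam * t)
  have hcs : c * s = 1 := by rw [← exp_add]; simp
  have hr : 0 < s * ‖x‖ := mul_pos (exp_pos _) (norm_pos_iff.mpr hx)
  have hut : (fun y => u y t) = fun y => c * f (s * ‖y‖) := funext fun y => hu y t
  rw [hut, divergence_normalized_gradient_selfSimilar hcs (exp_pos _) hx hdf (hdf' _ hr)
    (hode _ hr) (hpos _ hr.le).ne', gradient_selfSimilar hcs hx (hdf _ hr),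
    norm_div_norm_smul_self hx, sq_abs]
  refine ((hasDerivAt_selfSimilar (hdf _ hr)).congr_of_eventuallyEq
    (.of_forall (hu x))).congr_deriv ?_
  show lam * c * (f (s * ‖x‖) - s * ‖x‖ * deriv f (s * ‖x‖)) = _
  have hS := (sqrt_pos.mpr (by positivity : (0 : ℝ) < 1 + deriv f (s * ‖x‖) ^ 2)).ne'
  rw [mul_div_assoc', inv_div, eq_inv_of_mul_eq_one_left hcs]
  field_simp
  ring

/-- `u(x,t) = e^{λt} f(e^{−λt}|x|)` is a self-similar solution of the
graphical inverse mean curvature flow equation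
`u_t = −√(1+|∇u|²)·(div(∇u/√(1+|∇u|²)))⁻¹` on `(ℝⁿ \ {0}) × ℝ`. -/
theorem imcf_self_similar_solution (n : ℕ) (hn : 2 ≤ n)
    (lam mu : ℝ) (hlam : 0 < lam) (hmu : mu < 0)
    (f : ℝ → ℝ) (hf : IsIMCFSolGlobal n lam mu f)
    (u : EuclideanSpace ℝ (Fin n) → ℝ → ℝ)
    (hu : ∀ x t, u x t = Real.exp (lam * t) * f (Real.exp (-lam * t) * ‖x‖)) :
    ∀ x : EuclideanSpace ℝ (Fin n), x ≠ 0 → ∀ t : ℝ,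
      HasDerivAt (u x)
        (-(Real.sqrt (1 + ‖gradient (fun y => u y t) x‖ ^ 2) *
          (divergence (fun y =>
              (Real.sqrt (1 + ‖gradient (fun z => u z t) y‖ ^ 2))⁻¹ •
                gradient (fun z => u z t) y) x)⁻¹)) t :=
  imcf_self_similar_solution_general n lam mu f hf u hu
end
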